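/- arXiv:0712.4036 — 4 statements merged into one kernel-verified Lean document; each statement's English description precedes it below -/
import Mathlib

section
/- For fixed n and 1 ≤ q ≤ n, the set of Hermitian n×n matrices whose sum of q smallest eigenvalues is nonnegative is a closed convex cone: it is closed under addition, under multiplication by nonnegative real scalars, and is topologically closed in the space of Hermitian matrices. -/
open Matrix Finset

/-- The sum of the `q` smallest eigenvalues of a Hermitian matrix `M`, encoded as the
infimum of all sums of `q` eigenvalues (counted with multiplicity). -/
noncomputable def sqMin {n : ℕ} (q : ℕ) (M : Matrix (Fin n) (Fin n) ℂ) : ℝ :=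
  sInf {t : ℝ | ∃ hM : M.IsHermitian, ∃ s : Finset (Fin n),
    s.card = q ∧ t = ∑ i ∈ s, hM.eigenvalues i}

namespace SqMinAux

variable {n : ℕ}

/-- The (real) quadratic form associated to a matrix. -/
noncomputable def qf (M : Matrix (Fin n) (Fin n) ℂ) (v : EuclideanSpace ℂ (Fin n)) : ℝ :=
  (inner (𝕜 := ℂ) v (Matrix.toEuclideanLin M v)).re

lemma key (M : Matrix (Fin n) (Fin n) ℂ) (hM : M.IsHermitian) (j : Fin n) :
    Matrix.toEuclideanLin M (hM.eigenvectorBasis j)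
      = ((hM.eigenvalues j : ℂ)) • hM.eigenvectorBasis j := by
  have h := hM.mulVec_eigenvectorBasis j
  rw [Matrix.toEuclideanLin_apply]
  have : (WithLp.equiv 2 (Fin n → ℂ)) (hM.eigenvectorBasis j) = ⇑(hM.eigenvectorBasis j) := rfl
  rw [h, RCLike.real_smul_eq_coe_smul (K := ℂ)]
  rfl

lemma parseval (b : OrthonormalBasis (Fin n) ℂ (EuclideanSpace ℂ (Fin n)))
    (x : EuclideanSpace ℂ (Fin n)) :
    ∑ j, ‖(inner (𝕜 := ℂ) (b j) x : ℂ)‖ ^ 2 = ‖x‖ ^ 2 := by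
  simp_rw [← b.repr_apply_apply]
  have h1 : ‖x‖ = ‖b.repr x‖ := (b.repr.norm_map x).symm
  rw [h1, EuclideanSpace.norm_eq, Real.sq_sqrt (by positivity)]

lemma qf_eq (M : Matrix (Fin n) (Fin n) ℂ) (hM : M.IsHermitian) (v : EuclideanSpace ℂ (Fin n)) :
    qf M v = ∑ j, hM.eigenvalues j * ‖(inner (𝕜 := ℂ) (hM.eigenvectorBasis j) v : ℂ)‖ ^ 2 := by
  set b := hM.eigenvectorBasis with hb
  have hTv : (Matrix.toEuclideanLin M) v = ∑ j, (b.repr v j * (hM.eigenvalues j : ℂ)) • b j := by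
    conv_lhs => rw [← b.sum_repr v]
    rw [map_sum]
    refine Finset.sum_congr rfl fun j _ => ?_
    rw [LinearMap.map_smul, key M hM j, smul_smul]
  rw [qf, hTv, inner_sum, Complex.re_sum]
  refine Finset.sum_congr rfl fun j _ => ?_
  have hc : (inner (𝕜 := ℂ) v (b j) : ℂ) = (starRingEnd ℂ) (b.repr v j) := by
    rw [← inner_conj_symm, b.repr_apply_apply]
  rw [inner_smul_right, hc, mul_comm (b.repr v j), mul_assoc, Complex.mul_conj,
    ← b.repr_apply_apply]
  rw [← Complex.ofReal_mul, Complex.ofReal_re]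
  congr 1
  rw [Complex.sq_norm]

lemma qf_basis (M : Matrix (Fin n) (Fin n) ℂ) (hM : M.IsHermitian) (k : Fin n) :
    qf M (hM.eigenvectorBasis k) = hM.eigenvalues k := by
  rw [qf, key M hM k, inner_smul_right]
  have : (inner (𝕜 := ℂ) (hM.eigenvectorBasis k) (hM.eigenvectorBasis k) : ℂ) = 1 := by
    rw [← hM.eigenvectorBasis.repr_apply_apply]
    simp
  rw [this, mul_one, Complex.ofReal_re]

lemma bathtub {q : ℕ} (hq1 : 1 ≤ q) (hqn : q ≤ n) (lam d : Fin n → ℝ)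
    (hd0 : ∀ j, 0 ≤ d j) (hd1 : ∀ j, d j ≤ 1) (hsum : ∑ j, d j = q)
    (hS : ∀ s : Finset (Fin n), s.card = q → 0 ≤ ∑ j ∈ s, lam j) :
    0 ≤ ∑ j, lam j * d j := by
  classical
  set σ := Tuple.sort lam with hσ
  have hmono : Monotone (lam ∘ σ) := Tuple.monotone_sort lam
  set s : Finset (Fin n) := Finset.image σ (Finset.univ.filter fun b : Fin n => (b : ℕ) < q)
    with hs
  have hmem : ∀ j, j ∈ s ↔ ((σ.symm j : Fin n) : ℕ) < q := by
    intro j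
    simp only [hs, Finset.mem_image, Finset.mem_filter, Finset.mem_univ, true_and]
    constructor
    · rintro ⟨b, hb, rfl⟩; simpa using hb
    · intro h; exact ⟨σ.symm j, h, σ.apply_symm_apply j⟩
  have hcardT : (Finset.univ.filter fun b : Fin n => (b : ℕ) < q).card = q := by
    refine Finset.card_eq_of_bijective (fun i hi => ⟨i, lt_of_lt_of_le hi hqn⟩) ?_ ?_ ?_
    · intro a ha
      simp only [Finset.mem_filter] at ha
      exact ⟨a, ha.2, rfl⟩
    · intro i hi; simp [hi]
    · intro i j hi hj h; simpa using congrArg Fin.val h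
  have hcard : s.card = q := by
    rw [hs, Finset.card_image_of_injective _ σ.injective, hcardT]
  have hq1n : q - 1 < n := lt_of_lt_of_le (Nat.sub_lt hq1 one_pos) hqn
  set μ := lam (σ ⟨q - 1, hq1n⟩) with hμ
  have hle : ∀ j ∈ s, lam j ≤ μ := by
    intro j hj
    have h1 : ((σ.symm j : Fin n) : ℕ) < q := (hmem j).1 hj
    have h2 : σ.symm j ≤ (⟨q - 1, hq1n⟩ : Fin n) := by
      simp only [Fin.le_def]; omega
    have := hmono h2
    simpa using this
  have hge : ∀ j ∈ sᶜ, μ ≤ lam j := by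
    intro j hj
    have h1 : ¬ ((σ.symm j : Fin n) : ℕ) < q := fun h => by
      simp only [Finset.mem_compl] at hj; exact hj ((hmem j).2 h)
    have h2 : (⟨q - 1, hq1n⟩ : Fin n) ≤ σ.symm j := by
      simp only [Fin.le_def]; omega
    have := hmono h2
    simpa using this
  have h1 : ∀ j ∈ s, lam j + μ * (d j - 1) ≤ lam j * d j := by
    intro j hj; nlinarith [hle j hj, hd1 j]
  have h2 : ∀ j ∈ sᶜ, μ * d j ≤ lam j * d j := by
    intro j hj; nlinarith [hge j hj, hd0 j]
  have A := Finset.sum_le_sum h1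
  have B := Finset.sum_le_sum h2
  have e1 : ∑ j ∈ s, (lam j + μ * (d j - 1)) = (∑ j ∈ s, lam j) + μ * ((∑ j ∈ s, d j) - q) := by
    rw [Finset.sum_add_distrib, ← Finset.mul_sum, Finset.sum_sub_distrib, Finset.sum_const,
      hcard, nsmul_eq_mul, mul_one]
  have e2 : ∑ j ∈ sᶜ, μ * d j = μ * ∑ j ∈ sᶜ, d j := (Finset.mul_sum _ _ _).symm
  have e3 : (∑ j ∈ s, d j) + ∑ j ∈ sᶜ, d j = q := by
    rw [Finset.sum_add_sum_compl]; exact hsum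
  have hsplit : ∑ j, lam j * d j = (∑ j ∈ s, lam j * d j) + ∑ j ∈ sᶜ, lam j * d j :=
    (Finset.sum_add_sum_compl s _).symm
  have := hS s hcard
  rw [e1] at A
  rw [e2] at B
  have e4 : μ * ((∑ j ∈ s, d j) - q) + μ * ∑ j ∈ sᶜ, d j = 0 := by
    have h0 : ((∑ j ∈ s, d j) - q) + ∑ j ∈ sᶜ, d j = 0 := by linarith
    have h5 : μ * ((((∑ j ∈ s, d j) - q)) + ∑ j ∈ sᶜ, d j) = 0 := by rw [h0, mul_zero]
    linarith [h5, (mul_add μ ((∑ j ∈ s, d j) - q) (∑ j ∈ sᶜ, d j)).symm ▸ h5]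
  rw [hsplit]
  linarith

/-- characterization of `0 ≤ sqMin` in terms of all `q`-subset eigenvalue sums. -/
lemma sqMin_nonneg_iff {q : ℕ} (hqn : q ≤ n) (M : Matrix (Fin n) (Fin n) ℂ)
    (hM : M.IsHermitian) :
    0 ≤ sqMin q M ↔ ∀ s : Finset (Fin n), s.card = q → 0 ≤ ∑ i ∈ s, hM.eigenvalues i := by
  classical
  set S := {t : ℝ | ∃ hM' : M.IsHermitian, ∃ s : Finset (Fin n),
    s.card = q ∧ t = ∑ i ∈ s, hM'.eigenvalues i} with hS
  have hne : S.Nonempty := by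
    obtain ⟨s, _, hcard⟩ := Finset.exists_subset_card_eq
      (s := (Finset.univ : Finset (Fin n))) (n := q) (by simpa using hqn)
    exact ⟨_, hM, s, hcard, rfl⟩
  have hfin : S.Finite := by
    refine Set.Finite.subset (Set.finite_range
      (fun s : Finset (Fin n) => ∑ i ∈ s, hM.eigenvalues i)) ?_
    rintro t ⟨hM', s, h1, rfl⟩
    exact ⟨s, rfl⟩
  have hbdd : BddBelow S := hfin.bddBelow
  constructor
  · intro h s hs
    have h2 : sqMin q M ≤ ∑ i ∈ s, hM.eigenvalues i := csInf_le hbdd ⟨hM, s, hs, rfl⟩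
    linarith
  · intro h
    exact le_csInf hne (by rintro t ⟨hM', s, h1, rfl⟩; exact h s h1)

/-- From nonneg eigenvalue subset sums to nonnegativity of orthonormal quadratic sums. -/
lemma eig_to_qf {q : ℕ} (hq1 : 1 ≤ q) (hqn : q ≤ n) (M : Matrix (Fin n) (Fin n) ℂ)
    (hM : M.IsHermitian)
    (h : ∀ s : Finset (Fin n), s.card = q → 0 ≤ ∑ i ∈ s, hM.eigenvalues i)
    (v : Fin q → EuclideanSpace ℂ (Fin n)) (hv : Orthonormal ℂ v) :
    0 ≤ ∑ i, qf M (v i) := by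
  classical
  set b := hM.eigenvectorBasis with hb
  set d : Fin n → ℝ := fun j => ∑ i, ‖(inner (𝕜 := ℂ) (b j) (v i) : ℂ)‖ ^ 2 with hd
  have hQ : ∑ i, qf M (v i) = ∑ j, hM.eigenvalues j * d j := by
    have h1 : ∀ i, qf M (v i)
        = ∑ j, hM.eigenvalues j * ‖(inner (𝕜 := ℂ) (b j) (v i) : ℂ)‖ ^ 2 :=
      fun i => qf_eq M hM (v i)
    rw [Finset.sum_congr rfl fun i _ => h1 i, Finset.sum_comm]
    refine Finset.sum_congr rfl fun j _ => ?_
    rw [hd, Finset.mul_sum]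
  have hd0 : ∀ j, 0 ≤ d j := fun j => Finset.sum_nonneg fun i _ => by positivity
  have hd1 : ∀ j, d j ≤ 1 := by
    intro j
    have hb1 : ‖b j‖ = 1 := b.orthonormal.1 j
    have := hv.sum_inner_products_le (s := Finset.univ) (b j)
    calc d j = ∑ i, ‖(inner (𝕜 := ℂ) (v i) (b j) : ℂ)‖ ^ 2 := by
          rw [hd]
          exact Finset.sum_congr rfl fun i _ => by rw [norm_inner_symm]
      _ ≤ ‖b j‖ ^ 2 := this
      _ = 1 := by rw [hb1]; norm_num
  have hsum : ∑ j, d j = q := by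
    simp only [hd]
    rw [Finset.sum_comm]
    have : ∀ i, ∑ j, ‖(inner (𝕜 := ℂ) (b j) (v i) : ℂ)‖ ^ 2 = 1 := by
      intro i
      rw [parseval b (v i), hv.1 i]
      norm_num
    rw [Finset.sum_congr rfl fun i _ => this i]
    simp
  rw [hQ]
  exact bathtub hq1 hqn _ d hd0 hd1 hsum h

lemma qf_to_eig {q : ℕ} (M : Matrix (Fin n) (Fin n) ℂ) (hM : M.IsHermitian)
    (h : ∀ v : Fin q → EuclideanSpace ℂ (Fin n), Orthonormal ℂ v → 0 ≤ ∑ i, qf M (v i))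
    (s : Finset (Fin n)) (hs : s.card = q) :
    0 ≤ ∑ i ∈ s, hM.eigenvalues i := by
  classical
  set b := hM.eigenvectorBasis with hb
  set e0 : Fin q ≃ {x // x ∈ s} := (finCongr hs.symm).trans s.equivFin.symm with he0
  set v : Fin q → EuclideanSpace ℂ (Fin n) := fun i => b (e0 i : Fin n) with hv
  have hinj : Function.Injective fun i : Fin q => ((e0 i : Fin n)) := by
    intro i j hij
    exact e0.injective (Subtype.ext hij)
  have horth : Orthonormal ℂ v := b.orthonormal.comp _ hinj
  have h0 := h v horth
  have hqf : ∑ i, qf M (v i) = ∑ i ∈ s, hM.eigenvalues i := by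
    have h1 : ∀ i, qf M (v i) = hM.eigenvalues (e0 i : Fin n) := fun i => qf_basis M hM _
    rw [Finset.sum_congr rfl fun i _ => h1 i,
      ← Finset.sum_coe_sort s (fun i => hM.eigenvalues i)]
    exact Fintype.sum_equiv e0 _ _ (fun i => rfl)
  linarith [hqf ▸ h0]

lemma herm_closed : IsClosed {H : Matrix (Fin n) (Fin n) ℂ | H.IsHermitian} := by
  have h : {H : Matrix (Fin n) (Fin n) ℂ | H.IsHermitian} = {H | Hᴴ = H} := rfl
  rw [h]
  exact isClosed_eq (continuous_id.matrix_conjTranspose) continuous_id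

lemma qf_continuous (w : EuclideanSpace ℂ (Fin n)) :
    Continuous fun H : Matrix (Fin n) (Fin n) ℂ => qf H w := by
  have hrep : ∀ H : Matrix (Fin n) (Fin n) ℂ,
      qf H w = (∑ j, (starRingEnd ℂ) (w j) * ∑ k, H j k * w k).re := by
    intro H
    rw [qf, Matrix.toEuclideanLin_apply, PiLp.inner_apply]
    simp [RCLike.inner_apply, Matrix.mulVec, dotProduct, mul_comm]
  simp only [hrep]
  apply Complex.continuous_re.comp
  apply continuous_finset_sum
  intro j _
  exact continuous_const.mul (continuous_finset_sum _ fun k _ =>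
    ((continuous_apply_apply j k).mul continuous_const))

lemma qf_add (A B : Matrix (Fin n) (Fin n) ℂ) (w : EuclideanSpace ℂ (Fin n)) :
    qf (A + B) w = qf A w + qf B w := by
  rw [qf, qf, qf, map_add, LinearMap.add_apply, inner_add_right, Complex.add_re]

lemma real_smul_eq (c : ℝ) (A : Matrix (Fin n) (Fin n) ℂ) :
    c • A = ((c : ℂ)) • A := by
  ext i j
  simp [Matrix.smul_apply, Complex.real_smul]

lemma qf_real_smul (c : ℝ) (A : Matrix (Fin n) (Fin n) ℂ) (w : EuclideanSpace ℂ (Fin n)) :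
    qf (c • A) w = c * qf A w := by
  rw [qf, real_smul_eq, _root_.map_smul, LinearMap.smul_apply, inner_smul_right, qf]
  simp [Complex.mul_re]

lemma herm_smul (c : ℝ) {A : Matrix (Fin n) (Fin n) ℂ} (hA : A.IsHermitian) :
    (c • A).IsHermitian := by
  rw [real_smul_eq]
  show ((c : ℂ) • A)ᴴ = (c : ℂ) • A
  rw [Matrix.conjTranspose_smul, Complex.star_def, Complex.conj_ofReal, hA.eq]

end SqMinAux

/-- For fixed `n` and `1 ≤ q ≤ n`, the set of Hermitian `n×n` matrices
whose sum of `q` smallest eigenvalues is nonnegative is a closed convex cone: closed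
under addition, under multiplication by nonnegative real scalars, and topologically
closed in the (real) space of Hermitian matrices. -/
theorem stmt_3 {n : ℕ} (q : ℕ) (hq1 : 1 ≤ q) (hqn : q ≤ n) :
    (∀ A ∈ {H : Matrix (Fin n) (Fin n) ℂ | H.IsHermitian ∧ 0 ≤ sqMin q H},
      ∀ B ∈ {H : Matrix (Fin n) (Fin n) ℂ | H.IsHermitian ∧ 0 ≤ sqMin q H},
        A + B ∈ {H : Matrix (Fin n) (Fin n) ℂ | H.IsHermitian ∧ 0 ≤ sqMin q H}) ∧
    (∀ c : ℝ, 0 ≤ c →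
      ∀ A ∈ {H : Matrix (Fin n) (Fin n) ℂ | H.IsHermitian ∧ 0 ≤ sqMin q H},
        c • A ∈ {H : Matrix (Fin n) (Fin n) ℂ | H.IsHermitian ∧ 0 ≤ sqMin q H}) ∧
    IsClosed {H : Matrix (Fin n) (Fin n) ℂ | H.IsHermitian ∧ 0 ≤ sqMin q H} := by
  have main_iff : ∀ M : Matrix (Fin n) (Fin n) ℂ, ∀ hM : M.IsHermitian,
      (0 ≤ sqMin q M ↔ ∀ v : Fin q → EuclideanSpace ℂ (Fin n), Orthonormal ℂ v →
        0 ≤ ∑ i, SqMinAux.qf M (v i)) := by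
    intro M hM
    rw [SqMinAux.sqMin_nonneg_iff hqn M hM]
    exact ⟨fun h v hv => SqMinAux.eig_to_qf hq1 hqn M hM h v hv,
      fun h s hs => SqMinAux.qf_to_eig M hM h s hs⟩
  refine ⟨?_, ?_, ?_⟩
  · rintro A ⟨hA, hA0⟩ B ⟨hB, hB0⟩
    refine ⟨hA.add hB, (main_iff _ (hA.add hB)).2 fun v hv => ?_⟩
    have h1 := (main_iff A hA).1 hA0 v hv
    have h2 := (main_iff B hB).1 hB0 v hv
    have h3 : ∑ i, SqMinAux.qf (A + B) (v i)
        = (∑ i, SqMinAux.qf A (v i)) + ∑ i, SqMinAux.qf B (v i) := by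
      rw [← Finset.sum_add_distrib]
      exact Finset.sum_congr rfl fun i _ => SqMinAux.qf_add A B (v i)
    rw [h3]
    linarith
  · rintro c hc A ⟨hA, hA0⟩
    refine ⟨SqMinAux.herm_smul c hA, (main_iff _ (SqMinAux.herm_smul c hA)).2 fun v hv => ?_⟩
    have h1 := (main_iff A hA).1 hA0 v hv
    have h3 : ∑ i, SqMinAux.qf (c • A) (v i) = c * ∑ i, SqMinAux.qf A (v i) := by
      rw [Finset.mul_sum]
      exact Finset.sum_congr rfl fun i _ => SqMinAux.qf_real_smul c A (v i)
    rw [h3]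
    exact mul_nonneg hc h1
  · have hset : {H : Matrix (Fin n) (Fin n) ℂ | H.IsHermitian ∧ 0 ≤ sqMin q H}
        = {H : Matrix (Fin n) (Fin n) ℂ | H.IsHermitian}
          ∩ ⋂ (v : Fin q → EuclideanSpace ℂ (Fin n)) (_ : Orthonormal ℂ v),
            {H | 0 ≤ ∑ i, SqMinAux.qf H (v i)} := by
      ext H
      simp only [Set.mem_setOf_eq, Set.mem_inter_iff, Set.mem_iInter]
      constructor
      · rintro ⟨h1, h2⟩
        exact ⟨h1, fun v hv => (main_iff H h1).1 h2 v hv⟩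
      · rintro ⟨h1, h2⟩
        exact ⟨h1, (main_iff H h1).2 h2⟩
    rw [hset]
    exact SqMinAux.herm_closed.inter (isClosed_iInter fun v => isClosed_iInter fun hv =>
      isClosed_le continuous_const
        (continuous_finset_sum _ fun i _ => SqMinAux.qf_continuous (v i)))
end

section
/- For Hermitian n×n matrices A and B and 1 ≤ q ≤ n, the sum of the q smallest eigenvalues is superadditive: s_q(A + B) ≥ s_q(A) + s_q(B), where s_q denotes the sum of the q smallest eigenvalues counted with multiplicity. Equivalently, s_q is a concave function on the space of Hermitian matrices. -/
namespace SqMinAux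

open Matrix Finset Complex

variable {n q : ℕ} {M : Matrix (Fin n) (Fin n) ℂ}

lemma set_finite (q : ℕ) (hM : M.IsHermitian) :
    {t : ℝ | ∃ hM : M.IsHermitian, ∃ s : Finset (Fin n),
      s.card = q ∧ t = ∑ i ∈ s, hM.eigenvalues i}.Finite := by
  apply Set.Finite.subset
    (Set.finite_range (fun s : Finset (Fin n) => ∑ i ∈ s, hM.eigenvalues i))
  rintro t ⟨hM', s, hs, rfl⟩
  exact ⟨s, rfl⟩

lemma sqMin_le (hM : M.IsHermitian) {s : Finset (Fin n)} (hs : s.card = q) :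
    sqMin q M ≤ ∑ i ∈ s, hM.eigenvalues i :=
  csInf_le (set_finite q hM).bddBelow ⟨hM, s, hs, rfl⟩

lemma sqMin_mem (hM : M.IsHermitian) (hqn : q ≤ n) :
    ∃ s : Finset (Fin n), s.card = q ∧ sqMin q M = ∑ i ∈ s, hM.eigenvalues i := by
  obtain ⟨s, -, hs⟩ := Finset.exists_subset_card_eq (s := (Finset.univ : Finset (Fin n))) (n := q)
    (by simpa using hqn)
  have hne : {t : ℝ | ∃ hM : M.IsHermitian, ∃ s : Finset (Fin n),
      s.card = q ∧ t = ∑ i ∈ s, hM.eigenvalues i}.Nonempty :=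
    ⟨_, hM, s, hs, rfl⟩
  obtain ⟨hM', s', hs', ht⟩ := hne.csInf_mem (set_finite q hM)
  exact ⟨s', hs', ht⟩

lemma card_filter_lt (hqn : q ≤ n) :
    ((Finset.univ : Finset (Fin n)).filter (fun j : Fin n => (j : ℕ) < q)).card = q := by
  have : ((Finset.univ : Finset (Fin n)).filter (fun j : Fin n => (j : ℕ) < q))
      = Finset.map (Fin.castLEEmb hqn) Finset.univ := by
    ext j
    simp only [Finset.mem_filter, Finset.mem_univ, true_and]
    constructor
    · intro hj
      refine Finset.mem_map.2 ⟨⟨(j : ℕ), hj⟩, Finset.mem_univ _, ?_⟩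
      ext
      simp [Fin.castLEEmb]
    · intro hj
      obtain ⟨i, -, rfl⟩ := Finset.mem_map.1 hj
      simpa using i.2
  rw [this, Finset.card_map, Finset.card_univ, Fintype.card_fin]

/-- The key weighted inequality: for weights `d ∈ [0,1]` summing to `q`, the weighted sum
of eigenvalues is at least the sum of the `q` smallest. -/
lemma weighted (hq1 : 1 ≤ q) (hqn : q ≤ n) (hM : M.IsHermitian)
    (d : Fin n → ℝ) (hd0 : ∀ k, 0 ≤ d k) (hd1 : ∀ k, d k ≤ 1)
    (hsum : ∑ k, d k = (q : ℝ)) :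
    sqMin q M ≤ ∑ k, hM.eigenvalues k * d k := by
  set f := hM.eigenvalues with hf
  set σ := Tuple.sort f with hσ
  have hmono := Tuple.monotone_sort f
  have hq' : q - 1 < n := by omega
  set μ : ℝ := f (σ ⟨q - 1, hq'⟩) with hμ
  set S : Finset (Fin n) :=
    ((Finset.univ : Finset (Fin n)).filter (fun j : Fin n => (j : ℕ) < q)).image σ with hS
  have hScard : S.card = q := by
    rw [hS, Finset.card_image_of_injective _ σ.injective, card_filter_lt hqn]
  have hmemS : ∀ k : Fin n, k ∈ S ↔ ((σ.symm k : Fin n) : ℕ) < q := by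
    intro k
    simp only [hS, Finset.mem_image, Finset.mem_filter, Finset.mem_univ, true_and]
    constructor
    · rintro ⟨j, hj, rfl⟩
      simpa using hj
    · intro hk
      exact ⟨σ.symm k, hk, σ.apply_symm_apply k⟩
  have hle : ∀ k ∈ S, f k ≤ μ := by
    intro k hk
    have h1 : ((σ.symm k : Fin n) : ℕ) < q := (hmemS k).1 hk
    have : (f ∘ σ) (σ.symm k) ≤ (f ∘ σ) ⟨q - 1, hq'⟩ := by
      apply hmono
      simp only [Fin.le_def]
      omega
    simpa using this
  have hge : ∀ k ∉ S, μ ≤ f k := by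
    intro k hk
    have h1 : ¬ ((σ.symm k : Fin n) : ℕ) < q := fun h => hk ((hmemS k).2 h)
    have : (f ∘ σ) ⟨q - 1, hq'⟩ ≤ (f ∘ σ) (σ.symm k) := by
      apply hmono
      simp only [Fin.le_def]
      omega
    simpa using this
  have key : ∑ k ∈ S, f k ≤ ∑ k, f k * d k := by
    have h1 : ∑ k ∈ S, f k = ∑ k ∈ S, (f k - μ) + μ * q := by
      rw [Finset.sum_sub_distrib]
      simp [hScard]
      ring
    have h2 : ∑ k, f k * d k = ∑ k, (f k - μ) * d k + μ * q := by
      have : ∑ k, (f k - μ) * d k = ∑ k, f k * d k - μ * ∑ k, d k := by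
        rw [Finset.mul_sum, ← Finset.sum_sub_distrib]
        congr 1; ext k; ring
      rw [this, hsum]; ring
    rw [h1, h2]
    have h3 : ∑ k ∈ S, (f k - μ) ≤ ∑ k ∈ S, (f k - μ) * d k := by
      apply Finset.sum_le_sum
      intro k hk
      nlinarith [hle k hk, hd1 k, hd0 k]
    have h4 : (0 : ℝ) ≤ ∑ k ∈ Sᶜ, (f k - μ) * d k := by
      apply Finset.sum_nonneg
      intro k hk
      exact mul_nonneg (sub_nonneg.2 (hge k (Finset.mem_compl.1 hk))) (hd0 k)
    have h5 : ∑ k, (f k - μ) * d k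
        = ∑ k ∈ S, (f k - μ) * d k + ∑ k ∈ Sᶜ, (f k - μ) * d k :=
      (Finset.sum_add_sum_compl S _).symm
    linarith
  calc sqMin q M ≤ ∑ k ∈ S, f k := sqMin_le hM hScard
    _ ≤ ∑ k, f k * d k := key

/-- Ky Fan type lower bound: any partial diagonal sum of `U* M U` for unitary `U`
dominates the sum of the `q` smallest eigenvalues. -/
lemma kyFan (hq1 : 1 ≤ q) (hqn : q ≤ n) (hM : M.IsHermitian)
    {U : Matrix (Fin n) (Fin n) ℂ} (hU : U ∈ Matrix.unitaryGroup (Fin n) ℂ)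
    {s : Finset (Fin n)} (hs : s.card = q) :
    sqMin q M ≤ (∑ i ∈ s, (star U * M * U) i i).re := by
  set V : Matrix (Fin n) (Fin n) ℂ := (hM.eigenvectorUnitary : Matrix (Fin n) (Fin n) ℂ) with hV
  have hVmem : V ∈ Matrix.unitaryGroup (Fin n) ℂ := hM.eigenvectorUnitary.2
  set W : Matrix (Fin n) (Fin n) ℂ := star U * V with hW
  have hWmem : W ∈ Matrix.unitaryGroup (Fin n) ℂ :=
    mul_mem (Unitary.star_mem hU) hVmem
  have hWW : star W * W = 1 := (Matrix.mem_unitaryGroup_iff').1 hWmem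
  have hWW' : W * star W = 1 := (Matrix.mem_unitaryGroup_iff).1 hWmem
  -- column norms
  have hcol : ∀ k, ∑ i, Complex.normSq (W i k) = 1 := by
    intro k
    have := congrArg (fun X => X k k) hWW
    simp only [Matrix.mul_apply, Matrix.star_apply, Matrix.one_apply_eq] at this
    have h2 : (((∑ i, Complex.normSq (W i k) : ℝ)) : ℂ) = 1 := by
      rw [← this]
      push_cast
      congr 1; ext i
      rw [show (star (W i k)) = (starRingEnd ℂ) (W i k) from rfl,
        ← Complex.normSq_eq_conj_mul_self]
    exact_mod_cast h2
  -- row norms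
  have hrow : ∀ i, ∑ k, Complex.normSq (W i k) = 1 := by
    intro i
    have := congrArg (fun X => X i i) hWW'
    simp only [Matrix.mul_apply, Matrix.star_apply, Matrix.one_apply_eq] at this
    have h2 : (((∑ k, Complex.normSq (W i k) : ℝ)) : ℂ) = 1 := by
      rw [← this]
      push_cast
      congr 1; ext k
      rw [mul_comm, show (star (W i k)) = (starRingEnd ℂ) (W i k) from rfl,
        ← Complex.normSq_eq_conj_mul_self]
    exact_mod_cast h2
  set D : Matrix (Fin n) (Fin n) ℂ :=
    Matrix.diagonal (RCLike.ofReal ∘ hM.eigenvalues) with hD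
  have hdecomp : star U * M * U = W * D * star W := by
    have hspec : M = V * D * star V := hM.spectral_theorem
    rw [hW]
    rw [Matrix.star_mul, star_star]
    calc star U * M * U = star U * (V * D * star V) * U := by rw [← hspec]
      _ = star U * V * D * (star V * U) := by
        simp only [Matrix.mul_assoc]
  have hentry : ∀ i, (W * D * star W) i i
      = ∑ k, ((hM.eigenvalues k : ℂ) * (Complex.normSq (W i k) : ℂ)) := by
    intro i
    rw [Matrix.mul_assoc, Matrix.mul_apply]
    congr 1; ext k
    rw [Matrix.mul_apply]
    rw [Finset.sum_eq_single k]
    · simp only [hD, Matrix.diagonal_apply_eq, Matrix.star_apply, Function.comp_apply]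
      rw [show (star (W i k)) = (starRingEnd ℂ) (W i k) from rfl]
      rw [show (RCLike.ofReal (hM.eigenvalues k) : ℂ) = ((hM.eigenvalues k : ℝ) : ℂ) from rfl]
      rw [mul_left_comm, Complex.mul_conj]
    · intro b _ hb
      simp [hD, Matrix.diagonal_apply_ne' _ hb]
    · simp
  set d : Fin n → ℝ := fun k => ∑ i ∈ s, Complex.normSq (W i k) with hd
  have hsumform : (∑ i ∈ s, (star U * M * U) i i)
      = ((∑ k, hM.eigenvalues k * d k : ℝ) : ℂ) := by
    rw [hdecomp] at *
    calc ∑ i ∈ s, (W * D * star W) i i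
        = ∑ i ∈ s, ∑ k, ((hM.eigenvalues k : ℂ) * (Complex.normSq (W i k) : ℂ)) := by
          exact Finset.sum_congr rfl fun i _ => hentry i
      _ = ∑ k, ∑ i ∈ s, ((hM.eigenvalues k : ℂ) * (Complex.normSq (W i k) : ℂ)) :=
          Finset.sum_comm
      _ = ((∑ k, hM.eigenvalues k * d k : ℝ) : ℂ) := by
          push_cast [hd, Finset.mul_sum]
          rfl
  rw [hsumform, Complex.ofReal_re]
  apply weighted hq1 hqn hM d
  · intro k
    exact Finset.sum_nonneg fun i _ => Complex.normSq_nonneg _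
  · intro k
    calc d k ≤ ∑ i, Complex.normSq (W i k) :=
          Finset.sum_le_sum_of_subset_of_nonneg (Finset.subset_univ s)
            (fun i _ _ => Complex.normSq_nonneg _)
      _ = 1 := hcol k
  · calc ∑ k, d k = ∑ i ∈ s, ∑ k, Complex.normSq (W i k) := Finset.sum_comm
      _ = ∑ i ∈ s, (1 : ℝ) := Finset.sum_congr rfl fun i _ => hrow i
      _ = (q : ℝ) := by simp [hs]

/-- The minimum is achieved by a unitary and a subset. -/
lemma exists_eq (hqn : q ≤ n) (hM : M.IsHermitian) :
    ∃ U ∈ Matrix.unitaryGroup (Fin n) ℂ, ∃ s : Finset (Fin n), s.card = q ∧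
      (∑ i ∈ s, (star U * M * U) i i).re = sqMin q M := by
  obtain ⟨s, hs, hval⟩ := sqMin_mem hM hqn
  refine ⟨(hM.eigenvectorUnitary : Matrix (Fin n) (Fin n) ℂ), hM.eigenvectorUnitary.2, s, hs, ?_⟩
  rw [← Unitary.conjStarAlgAut_star_apply (S := ℂ), hM.conjStarAlgAut_star_eigenvectorUnitary]
  simp only [Matrix.diagonal_apply_eq, Function.comp_apply, RCLike.ofReal_alg]
  rw [hval]
  push_cast
  simp

lemma superadd (hq1 : 1 ≤ q) (hqn : q ≤ n) (A B : Matrix (Fin n) (Fin n) ℂ)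
    (hA : A.IsHermitian) (hB : B.IsHermitian) :
    sqMin q A + sqMin q B ≤ sqMin q (A + B) := by
  obtain ⟨U, hU, s, hs, hval⟩ := exists_eq hqn (hA.add hB)
  have h1 := kyFan hq1 hqn hA hU hs
  have h2 := kyFan hq1 hqn hB hU hs
  have hsplit : (∑ i ∈ s, (star U * (A + B) * U) i i).re
      = (∑ i ∈ s, (star U * A * U) i i).re + (∑ i ∈ s, (star U * B * U) i i).re := by
    have : star U * (A + B) * U = star U * A * U + star U * B * U := by
      rw [Matrix.mul_add, Matrix.add_mul]
    rw [this]
    simp [Finset.sum_add_distrib]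
  rw [hsplit] at hval
  linarith

lemma smul_hermitian (c : ℝ) (hM : M.IsHermitian) : (c • M).IsHermitian := by
  unfold Matrix.IsHermitian
  rw [Matrix.conjTranspose_smul, hM]
  norm_num

lemma smul_ge (hq1 : 1 ≤ q) (hqn : q ≤ n) (hM : M.IsHermitian)
    {c : ℝ} (hc : 0 ≤ c) : c * sqMin q M ≤ sqMin q (c • M) := by
  obtain ⟨U, hU, s, hs, hval⟩ := exists_eq hqn (smul_hermitian c hM)
  have hre : (∑ i ∈ s, (star U * (c • M) * U) i i).re
      = c * (∑ i ∈ s, (star U * M * U) i i).re := by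
    have h1 : star U * (c • M) * U = c • (star U * M * U) := by
      rw [Matrix.mul_smul, Matrix.smul_mul]
    rw [h1]
    simp only [Matrix.smul_apply]
    rw [← Finset.smul_sum]
    rw [Complex.real_smul, Complex.re_ofReal_mul]
  rw [hre] at hval
  have h2 := kyFan hq1 hqn hM hU hs
  nlinarith

end SqMinAux

/-- For Hermitian `n×n` matrices `A`, `B` and `1 ≤ q ≤ n`, the sum of the
`q` smallest eigenvalues is superadditive: `s_q(A+B) ≥ s_q(A) + s_q(B)`; equivalently,
`s_q` is concave on the space of Hermitian matrices. -/
theorem stmt_4 {n q : ℕ} (hq1 : 1 ≤ q) (hqn : q ≤ n)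
    (A B : Matrix (Fin n) (Fin n) ℂ) (hA : A.IsHermitian) (hB : B.IsHermitian) :
    sqMin q A + sqMin q B ≤ sqMin q (A + B) ∧
    ∀ t : ℝ, 0 ≤ t → t ≤ 1 →
      t * sqMin q A + (1 - t) * sqMin q B ≤ sqMin q (t • A + (1 - t) • B) := by
  constructor
  · exact SqMinAux.superadd hq1 hqn A B hA hB
  · intro t ht0 ht1
    have h1t : (0 : ℝ) ≤ 1 - t := by linarith
    have hA' := SqMinAux.smul_hermitian t hA
    have hB' := SqMinAux.smul_hermitian (1 - t) hB
    have hsuper := SqMinAux.superadd hq1 hqn (t • A) ((1 - t) • B) hA' hB'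
    have hsA := SqMinAux.smul_ge hq1 hqn hA ht0
    have hsB := SqMinAux.smul_ge hq1 hqn hB h1t
    linarith
end

section
/- Let ω be the standard Kähler form on a Hermitian complex vector space of dimension n, and let ν be a real (1,1)-form. For any k ≥ 0, the (k+1,k+1)-form ν ∧ ω^k is weakly positive if and only if it is strongly positive. -/
open scoped ComplexOrder

/-- A complexified tangent vector of `ℂⁿ`: the pair of its (1,0)-part and of the
conjugate of its (0,1)-part (so a (1,0)-vector `x` is `(x, 0)` and its conjugate `x̄`
is `(0, x)`). -/
abbrev CVec (n : ℕ) := (Fin n → ℂ) × (Fin n → ℂ)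

/-- The (1,0)-covector with coefficients `u`, evaluated on a complexified vector. -/
noncomputable def hol {n : ℕ} (u : Fin n → ℂ) (v : CVec n) : ℂ := ∑ j, u j * v.1 j

/-- The conjugate (0,1)-covector `ξ̄` of the (1,0)-covector `ξ` with coefficients `u`:
on the conjugate `x̄ = (0,x)` of a (1,0)-vector it takes the value `conj (ξ x)`. -/
noncomputable def antihol {n : ℕ} (u : Fin n → ℂ) (v : CVec n) : ℂ :=
  ∑ j, (starRingEnd ℂ) (u j) * (starRingEnd ℂ) (v.2 j)

/-- Interleaving of two `p`-tuples into a `2p`-tuple: `f₁, g₁, f₂, g₂, …`. -/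
def intl {p : ℕ} {α : Type*} (f g : Fin p → α) : Fin (2 * p) → α :=
  fun d =>
    if d.val % 2 = 0 then f ⟨d.val / 2, by have := d.isLt; omega⟩
    else g ⟨d.val / 2, by have := d.isLt; omega⟩

/-- The strongly positive monomial `(−i)^p ξ₁ ∧ ξ̄₁ ∧ … ∧ ξ_p ∧ ξ̄_p` attached to a
`p`-tuple of (1,0)-covectors, as a `2p`-multilinear function of complexified vectors
(determinant convention for evaluating wedges of covectors). -/
noncomputable def monoP {n p : ℕ} (ξ : Fin p → Fin n → ℂ) :
    (Fin (2 * p) → CVec n) → ℂ := fun v =>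
  (-Complex.I) ^ p *
    Matrix.det (Matrix.of fun d e : Fin (2 * p) =>
      intl (fun j => hol (ξ j)) (fun j => antihol (ξ j)) d (v e))

/-- Weak positivity of a `(p,p)`-form `F`: `i^p F(x₁, x̄₁, …, x_p, x̄_p) ≥ 0` (in
particular the value is real) for all (1,0)-vectors `x₁, …, x_p`. -/
def WeakPos {n : ℕ} (p : ℕ) (F : (Fin (2 * p) → CVec n) → ℂ) : Prop :=
  ∀ x : Fin p → Fin n → ℂ,
    0 ≤ Complex.I ^ p *
      F (intl (fun j => ((x j, 0) : CVec n)) (fun j => ((0, x j) : CVec n)))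

/-- Strong positivity of a `(p,p)`-form `F`: `F` is a nonnegative linear combination
of monomials `(−i)^p ξ₁ ∧ ξ̄₁ ∧ … ∧ ξ_p ∧ ξ̄_p` with `ξⱼ` (1,0)-covectors. -/
def StrongPos {n : ℕ} (p : ℕ) (F : (Fin (2 * p) → CVec n) → ℂ) : Prop :=
  ∃ (m : ℕ) (c : Fin m → ℝ) (ξ : Fin m → Fin p → Fin n → ℂ),
    (∀ t, 0 ≤ c t) ∧ F = fun v => ∑ t, (c t : ℂ) * monoP (ξ t) v

/-- The wedge product `β₁ ∧ … ∧ β_p` of `p` two-forms (each given as a bilinear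
function of two complexified vectors), as a `2p`-form. -/
noncomputable def wedge2s {n : ℕ} (p : ℕ) (β : Fin p → ((Fin 2 → CVec n) → ℂ)) :
    (Fin (2 * p) → CVec n) → ℂ := fun v =>
  (1 / 2 ^ p : ℂ) * ∑ σ : Equiv.Perm (Fin (2 * p)),
    ((Equiv.Perm.sign σ : ℤ) : ℂ) *
      ∏ l : Fin p, β l (fun t =>
        v (σ ⟨2 * l.val + t.val, by have := l.isLt; have := t.isLt; omega⟩))

namespace S9

open Finset Equiv Complex

variable {n p : ℕ}

def lo (l : Fin p) : Fin (2*p) := ⟨2*l.1, by omega⟩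
def hi (l : Fin p) : Fin (2*p) := ⟨2*l.1+1, by omega⟩

lemma intl_lo {α : Type*} (f g : Fin p → α) (l : Fin p) : intl f g (lo l) = f l := by
  simp only [intl, lo]
  refine (if_pos (by omega)).trans ?_
  congr 1
  refine Fin.ext ?_
  show (2*l.1)/2 = l.1
  omega

lemma intl_hi {α : Type*} (f g : Fin p → α) (l : Fin p) : intl f g (hi l) = g l := by
  simp only [intl, hi]
  refine (if_neg (by omega)).trans ?_
  congr 1
  refine Fin.ext ?_
  show (2*l.1+1)/2 = l.1
  omega

def pairEquiv (p : ℕ) : Fin p × Fin 2 ≃ Fin (2*p) where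
  toFun x := ⟨2*x.1.1 + x.2.1, by have := x.1.isLt; have := x.2.isLt; omega⟩
  invFun d := (⟨d.1/2, by have := d.isLt; omega⟩, ⟨d.1 % 2, by omega⟩)
  left_inv x := by
    have := x.2.isLt
    ext <;> simp <;> omega
  right_inv d := by
    ext
    simp
    omega

lemma prod_split {M : Type*} [CommMonoid M] (g : Fin (2*p) → M) :
    ∏ i, g i = ∏ l : Fin p, (g (lo l) * g (hi l)) := by
  rw [← Equiv.prod_comp (pairEquiv p) g, Fintype.prod_prod_type]
  refine Finset.prod_congr rfl fun l _ => ?_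
  rw [Fin.prod_univ_two]
  rfl

lemma sum_perm_mul_prod_eq_det {N : ℕ} (A : Matrix (Fin N) (Fin N) ℂ) :
    ∑ σ : Equiv.Perm (Fin N), ((Equiv.Perm.sign σ : ℤ) : ℂ) * ∏ i, A i (σ i) = A.det := by
  rw [← Matrix.det_transpose, Matrix.det_apply]
  refine Finset.sum_congr rfl fun σ _ => ?_
  rw [Units.smul_def, zsmul_eq_mul]
  push_cast
  simp [Matrix.transpose_apply]

end S9
namespace S9

variable {n p : ℕ}

noncomputable def DetF (P Q : Fin p → CVec n → ℂ) (v : Fin (2*p) → CVec n) : ℂ :=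
  Matrix.det (Matrix.of fun i j : Fin (2*p) => intl P Q i (v j))

lemma monoP_eq_DetF (ξ : Fin p → Fin n → ℂ) (v : Fin (2*p) → CVec n) :
    monoP ξ v = (-Complex.I)^p * DetF (n := n) (fun j => hol (ξ j)) (fun j => antihol (ξ j)) v := rfl

lemma wedge2s_eq (M : Type*) [Fintype M] (β : Fin p → (Fin 2 → CVec n) → ℂ)
    (c : Fin p → M → ℂ) (P Q : Fin p → M → CVec n → ℂ)
    (hβ : ∀ l (w : Fin 2 → CVec n), β l w = ∑ m, c l m * (P l m (w 0) * Q l m (w 1)))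
    (v : Fin (2*p) → CVec n) :
    wedge2s p β v = (1/2^p : ℂ) *
      ∑ f : Fin p → M, (∏ l, c l (f l)) *
        DetF (fun l => P l (f l)) (fun l => Q l (f l)) v := by
  unfold wedge2s
  congr 1
  calc ∑ σ : Equiv.Perm (Fin (2*p)), ((Equiv.Perm.sign σ : ℤ) : ℂ) *
        ∏ l : Fin p, β l (fun t => v (σ ⟨2*l.1+t.1, by have := l.isLt; have := t.isLt; omega⟩))
      = ∑ σ : Equiv.Perm (Fin (2*p)), ∑ f : Fin p → M, ((Equiv.Perm.sign σ : ℤ) : ℂ) *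
          ((∏ l, c l (f l)) * ∏ l : Fin p, P l (f l) (v (σ (lo l))) * Q l (f l) (v (σ (hi l)))) := by
        refine Finset.sum_congr rfl fun σ _ => ?_
        rw [← Finset.mul_sum]
        congr 1
        have h1 : (∏ l : Fin p, β l (fun t => v (σ ⟨2*l.1+t.1, by have := l.isLt; have := t.isLt; omega⟩)))
            = ∏ l : Fin p, ∑ m, c l m * (P l m (v (σ (lo l))) * Q l m (v (σ (hi l)))) := by
          refine Finset.prod_congr rfl fun l _ => ?_
          rw [hβ]
          refine Finset.sum_congr rfl fun m _ => ?_
          congr 2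
        rw [h1, Finset.prod_univ_sum]
        refine Finset.sum_congr rfl fun f _ => ?_
        rw [← Finset.prod_mul_distrib]
    _ = ∑ f : Fin p → M, (∏ l, c l (f l)) *
          ∑ σ : Equiv.Perm (Fin (2*p)), ((Equiv.Perm.sign σ : ℤ) : ℂ) *
            ∏ i, intl (fun l => P l (f l)) (fun l => Q l (f l)) i (v (σ i)) := by
        rw [Finset.sum_comm]
        refine Finset.sum_congr rfl fun f _ => ?_
        rw [Finset.mul_sum]
        refine Finset.sum_congr rfl fun σ _ => ?_
        rw [prod_split (fun i => intl (fun l => P l (f l)) (fun l => Q l (f l)) i (v (σ i)))]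
        simp only [intl_lo, intl_hi]
        ring
    _ = ∑ f : Fin p → M, (∏ l, c l (f l)) * DetF (fun l => P l (f l)) (fun l => Q l (f l)) v := by
        refine Finset.sum_congr rfl fun f _ => ?_
        congr 1
        simpa [DetF] using sum_perm_mul_prod_eq_det
          (Matrix.of fun i j : Fin (2*p) => intl (fun l => P l (f l)) (fun l => Q l (f l)) i (v j))

end S9
namespace S9

variable {n p : ℕ}

lemma half_eq (i : Fin (2*p)) (l₀ : Fin p) (h1 : i ≠ lo l₀) (h2 : i ≠ hi l₀) :
    i.1 / 2 ≠ l₀.1 := by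
  intro h
  have h1' : i.1 ≠ 2 * l₀.1 := fun hh => h1 (Fin.ext hh)
  have h2' : i.1 ≠ 2 * l₀.1 + 1 := fun hh => h2 (Fin.ext hh)
  omega

/-- Flip lemma: flipping the roles of P and Q at places where ε is true only changes
the determinant by the sign `(-1)^#ε`. -/
lemma detF_flip (u : Fin p → Fin n → ℂ) (v : Fin (2*p) → CVec n) :
    ∀ N (ε : Fin p → Bool), (Finset.univ.filter (fun l => ε l = true)).card = N →
    (∏ l, (if ε l then (-1 : ℂ) else 1)) *
      DetF (fun l => if ε l then antihol (u l) else hol (u l))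
           (fun l => if ε l then hol (u l) else antihol (u l)) v
    = DetF (fun l => hol (u l)) (fun l => antihol (u l)) v := by
  intro N
  induction N with
  | zero =>
    intro ε hc
    have hε : ∀ l, ε l = false := by
      intro l
      by_contra h
      have : l ∈ Finset.univ.filter (fun l => ε l = true) := by
        simp [Bool.not_eq_false] at h
        simp [h]
      rw [Finset.card_eq_zero] at hc
      simp [hc] at this
    simp [hε]
  | succ N ih =>
    intro ε hc
    have hne : (Finset.univ.filter (fun l => ε l = true)).Nonempty := by
      rw [← Finset.card_pos, hc]; omega
    obtain ⟨l₀, hl₀⟩ := hne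
    have hεl₀ : ε l₀ = true := by simpa using hl₀
    set ε' := Function.update ε l₀ false with hε'
    have hfilter : Finset.univ.filter (fun l => ε' l = true)
        = (Finset.univ.filter (fun l => ε l = true)).erase l₀ := by
      ext l
      by_cases h : l = l₀ <;> simp [hε', Function.update, h]
    have hcard : (Finset.univ.filter (fun l => ε' l = true)).card = N := by
      rw [hfilter, Finset.card_erase_of_mem hl₀, hc]
      omega
    have ihe := ih ε' hcard
    -- sign relation
    have hsgn : (∏ l, (if ε l then (-1 : ℂ) else 1))
        = -(∏ l, (if ε' l then (-1 : ℂ) else 1)) := by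
      rw [← Finset.mul_prod_erase Finset.univ _ (Finset.mem_univ l₀),
          ← Finset.mul_prod_erase Finset.univ (fun l => (if ε' l then (-1 : ℂ) else 1)) (Finset.mem_univ l₀)]
      have : ∀ l ∈ Finset.univ.erase l₀, (if ε l then (-1 : ℂ) else 1) = (if ε' l then (-1 : ℂ) else 1) := by
        intro l hl
        have : l ≠ l₀ := (Finset.mem_erase.mp hl).1
        simp [hε', Function.update, this]
      rw [Finset.prod_congr rfl this, hεl₀]
      simp [hε', Function.update]
    -- determinant relation
    have hswap : (lo l₀ : Fin (2*p)) ≠ hi l₀ := by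
      intro h
      have := congrArg Fin.val h
      simp [lo, hi] at this
    have hdet : DetF (fun l => if ε l then antihol (u l) else hol (u l))
                     (fun l => if ε l then hol (u l) else antihol (u l)) v
        = -DetF (fun l => if ε' l then antihol (u l) else hol (u l))
                (fun l => if ε' l then hol (u l) else antihol (u l)) v := by
      unfold DetF
      have hmat : (Matrix.of fun i j : Fin (2*p) =>
            intl (fun l => if ε l then antihol (u l) else hol (u l))
                 (fun l => if ε l then hol (u l) else antihol (u l)) i (v j))
          = (Matrix.of fun i j : Fin (2*p) =>
            intl (fun l => if ε' l then antihol (u l) else hol (u l))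
                 (fun l => if ε' l then hol (u l) else antihol (u l)) i (v j)).submatrix
            (Equiv.swap (lo l₀) (hi l₀)) id := by
        ext i j
        simp only [Matrix.submatrix_apply, Matrix.of_apply, id]
        by_cases h1 : i = lo l₀
        · subst h1
          rw [Equiv.swap_apply_left]
          rw [intl_lo, intl_hi]
          simp [hεl₀, hε', Function.update]
        · by_cases h2 : i = hi l₀
          · subst h2
            rw [Equiv.swap_apply_right]
            rw [intl_lo, intl_hi]
            simp [hεl₀, hε', Function.update]
          · rw [Equiv.swap_apply_of_ne_of_ne h1 h2]
            have hhalf := half_eq i l₀ h1 h2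
            have hupd : ∀ (h : i.1/2 < p), ε' ⟨i.1/2, h⟩ = ε ⟨i.1/2, h⟩ := by
              intro h
              rw [hε']
              exact Function.update_of_ne (fun hh => hhalf (congrArg Fin.val hh)) _ _
            unfold intl
            by_cases hpar : i.1 % 2 = 0 <;> simp [hpar, hupd]
      rw [hmat, Matrix.det_permute]
      simp [Equiv.Perm.sign_swap hswap]
    rw [hsgn, hdet, ← ihe]
    ring

end S9
namespace S9

variable {n p : ℕ}

lemma wedge2s_diag (β : Fin p → (Fin 2 → CVec n) → ℂ) (u : Fin n → Fin n → ℂ)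
    (a : Fin p → Fin n → ℂ)
    (hβ : ∀ l (w : Fin 2 → CVec n), β l w = -Complex.I * ∑ s, a l s *
      (hol (u s) (w 0) * antihol (u s) (w 1) - hol (u s) (w 1) * antihol (u s) (w 0)))
    (v : Fin (2*p) → CVec n) :
    wedge2s p β v = ∑ g : Fin p → Fin n, (∏ l, a l (g l)) * monoP (fun l => u (g l)) v := by
  have hβ' : ∀ l (w : Fin 2 → CVec n), β l w = ∑ m : Fin n × Bool,
      (if m.2 then Complex.I * a l m.1 else -Complex.I * a l m.1) *
      ((if m.2 then antihol (u m.1) else hol (u m.1)) (w 0) *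
       (if m.2 then hol (u m.1) else antihol (u m.1)) (w 1)) := by
    intro l w
    rw [hβ, Fintype.sum_prod_type, Finset.mul_sum]
    refine Finset.sum_congr rfl fun s _ => ?_
    rw [Fintype.sum_bool]
    norm_num
    ring
  rw [wedge2s_eq (Fin n × Bool) β _ _ _ hβ' v]
  rw [← Equiv.sum_comp (Equiv.arrowProdEquivProdArrow (Fin p) (fun _ => Fin n) (fun _ => Bool)).symm]
  have hterm : ∀ (g : Fin p → Fin n) (ε : Fin p → Bool),
      (∏ l, (if ε l then Complex.I * a l (g l) else -Complex.I * a l (g l))) *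
        DetF (fun l => if ε l then antihol (u (g l)) else hol (u (g l)))
             (fun l => if ε l then hol (u (g l)) else antihol (u (g l))) v
      = (∏ l, a l (g l)) * monoP (fun l => u (g l)) v := by
    intro g ε
    have h1 : (∏ l, (if ε l then Complex.I * a l (g l) else -Complex.I * a l (g l)))
        = ((-Complex.I)^p * ∏ l, a l (g l)) * ∏ l, (if ε l then (-1:ℂ) else 1) := by
      have : ∀ l : Fin p, (if ε l then Complex.I * a l (g l) else -Complex.I * a l (g l))
          = (-Complex.I) * a l (g l) * (if ε l then (-1:ℂ) else 1) := by
        intro l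
        by_cases h : ε l <;> simp [h] <;> ring
      rw [Finset.prod_congr rfl (fun l _ => this l), Finset.prod_mul_distrib,
        Finset.prod_mul_distrib, Finset.prod_const, Finset.card_univ, Fintype.card_fin]
    rw [h1, monoP_eq_DetF, mul_assoc,
      ← detF_flip (fun l => u (g l)) v (Finset.univ.filter (fun l => ε l = true)).card ε rfl]
    ring
  have hcongr : ∀ x : (Fin p → Fin n) × (Fin p → Bool),
      (∏ l, (if ((Equiv.arrowProdEquivProdArrow (Fin p) (fun _ => Fin n) (fun _ => Bool)).symm x l).2
          then Complex.I * a l ((Equiv.arrowProdEquivProdArrow (Fin p) (fun _ => Fin n) (fun _ => Bool)).symm x l).1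
          else -Complex.I * a l ((Equiv.arrowProdEquivProdArrow (Fin p) (fun _ => Fin n) (fun _ => Bool)).symm x l).1)) *
        DetF (fun l => (if ((Equiv.arrowProdEquivProdArrow (Fin p) (fun _ => Fin n) (fun _ => Bool)).symm x l).2
            then antihol (u ((Equiv.arrowProdEquivProdArrow (Fin p) (fun _ => Fin n) (fun _ => Bool)).symm x l).1)
            else hol (u ((Equiv.arrowProdEquivProdArrow (Fin p) (fun _ => Fin n) (fun _ => Bool)).symm x l).1)))
          (fun l => (if ((Equiv.arrowProdEquivProdArrow (Fin p) (fun _ => Fin n) (fun _ => Bool)).symm x l).2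
            then hol (u ((Equiv.arrowProdEquivProdArrow (Fin p) (fun _ => Fin n) (fun _ => Bool)).symm x l).1)
            else antihol (u ((Equiv.arrowProdEquivProdArrow (Fin p) (fun _ => Fin n) (fun _ => Bool)).symm x l).1))) v
      = (∏ l, a l (x.1 l)) * monoP (fun l => u (x.1 l)) v :=
    fun x => hterm x.1 x.2
  rw [Finset.sum_congr rfl (fun x _ => hcongr x), Fintype.sum_prod_type]
  have h2p : (2:ℂ)^p ≠ 0 := pow_ne_zero _ two_ne_zero
  rw [Finset.mul_sum]
  refine Finset.sum_congr rfl fun g _ => ?_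
  show (1/2^p : ℂ) * ∑ _y : Fin p → Bool, (∏ l, a l (g l)) * monoP (fun l => u (g l)) v
      = (∏ l, a l (g l)) * monoP (fun l => u (g l)) v
  rw [Finset.sum_const, Finset.card_univ]
  have hcb : Fintype.card (Fin p → Bool) = 2^p := by simp
  rw [hcb, nsmul_eq_mul]
  push_cast
  field_simp

end S9
namespace S9

variable {n p : ℕ}

noncomputable def pairMat (ξ x : Fin p → Fin n → ℂ) : Matrix (Fin p) (Fin p) ℂ :=
  Matrix.of fun j e => ∑ a2, ξ j a2 * x e a2

def sumEquiv (p : ℕ) : (Fin p ⊕ Fin p) ≃ Fin (2*p) where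
  toFun := Sum.elim lo hi
  invFun d := if d.1 % 2 = 0 then .inl ⟨d.1/2, by have := d.isLt; omega⟩
    else .inr ⟨d.1/2, by have := d.isLt; omega⟩
  left_inv x := by
    rcases x with j | j
    · simp only [Sum.elim_inl, lo]
      refine (if_pos (by omega)).trans ?_
      congr 1
      refine Fin.ext ?_
      show (2*j.1)/2 = j.1
      omega
    · simp only [Sum.elim_inr, hi]
      refine (if_neg (by omega)).trans ?_
      congr 1
      refine Fin.ext ?_
      show (2*j.1+1)/2 = j.1
      omega
  right_inv d := by
    dsimp only
    by_cases h : d.1 % 2 = 0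
    · rw [if_pos h]
      refine Fin.ext ?_
      show 2*(d.1/2) = d.1
      omega
    · rw [if_neg h]
      refine Fin.ext ?_
      show 2*(d.1/2)+1 = d.1
      omega

lemma monoP_eval (ξ x : Fin p → Fin n → ℂ) :
    Complex.I ^ p * monoP ξ (intl (fun j => ((x j, 0) : CVec n)) (fun j => ((0, x j) : CVec n)))
    = ((Complex.normSq ((pairMat ξ x).det) : ℝ) : ℂ) := by
  set v := intl (fun j => ((x j, 0) : CVec n)) (fun j => ((0, x j) : CVec n)) with hv
  set M := Matrix.of fun d e : Fin (2*p) =>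
    intl (fun j => hol (ξ j)) (fun j => antihol (ξ j)) d (v e) with hM
  have hblock : M.submatrix (sumEquiv p) (sumEquiv p)
      = Matrix.fromBlocks (pairMat ξ x) 0 0 ((pairMat ξ x).map (starRingEnd ℂ)) := by
    ext i j
    rcases i with j1 | j1 <;> rcases j with e1 | e1 <;>
      simp only [Matrix.submatrix_apply, sumEquiv, Equiv.coe_fn_mk, Sum.elim_inl, Sum.elim_inr,
        hM, Matrix.of_apply, hv, intl_lo, intl_hi, Matrix.fromBlocks_apply₁₁,
        Matrix.fromBlocks_apply₁₂, Matrix.fromBlocks_apply₂₁, Matrix.fromBlocks_apply₂₂] <;>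
      simp [hol, antihol, pairMat]
  have hdet : M.det = (pairMat ξ x).det * (starRingEnd ℂ) ((pairMat ξ x).det) := by
    rw [← Matrix.det_submatrix_equiv_self (sumEquiv p) M, hblock,
      Matrix.det_fromBlocks_zero₂₁, RingHom.map_det]
    rfl
  show Complex.I ^ p * ((-Complex.I)^p * M.det) = _
  rw [hdet, ← mul_assoc, ← mul_pow]
  simp [Complex.mul_conj]

def dbl (π : Equiv.Perm (Fin p)) : Equiv.Perm (Fin (2*p)) :=
  Equiv.permCongr (sumEquiv p) (Equiv.sumCongr π π)

lemma dbl_lo (π : Equiv.Perm (Fin p)) (l : Fin p) : dbl π (lo l) = lo (π l) := by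
  show (sumEquiv p) (Equiv.sumCongr π π ((sumEquiv p).symm (lo l))) = lo (π l)
  have h1 : (sumEquiv p).symm (lo l) = Sum.inl l := (sumEquiv p).symm_apply_apply (Sum.inl l)
  rw [h1]
  rfl

lemma dbl_hi (π : Equiv.Perm (Fin p)) (l : Fin p) : dbl π (hi l) = hi (π l) := by
  show (sumEquiv p) (Equiv.sumCongr π π ((sumEquiv p).symm (hi l))) = hi (π l)
  have h1 : (sumEquiv p).symm (hi l) = Sum.inr l := (sumEquiv p).symm_apply_apply (Sum.inr l)
  rw [h1]
  rfl

lemma sign_dbl (π : Equiv.Perm (Fin p)) : Equiv.Perm.sign (dbl π) = 1 := by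
  unfold dbl
  rw [Equiv.Perm.sign_permCongr, Equiv.Perm.sign_sumCongr]
  simp

lemma lo_hi_cases (d : Fin (2*p)) : (∃ l, d = lo l) ∨ (∃ l, d = hi l) := by
  by_cases h : d.1 % 2 = 0
  · exact Or.inl ⟨⟨d.1/2, by have := d.isLt; omega⟩, Fin.ext (by show d.1 = 2*(d.1/2); omega)⟩
  · exact Or.inr ⟨⟨d.1/2, by have := d.isLt; omega⟩, Fin.ext (by show d.1 = 2*(d.1/2)+1; omega)⟩

lemma monoP_perm (ξ : Fin p → Fin n → ℂ) (π : Equiv.Perm (Fin p)) (v : Fin (2*p) → CVec n) :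
    monoP (fun l => ξ (π l)) v = monoP ξ v := by
  unfold monoP
  congr 1
  have hmat : (Matrix.of fun d e : Fin (2*p) =>
        intl (fun j => hol (ξ (π j))) (fun j => antihol (ξ (π j))) d (v e))
      = (Matrix.of fun d e : Fin (2*p) =>
        intl (fun j => hol (ξ j)) (fun j => antihol (ξ j)) d (v e)).submatrix (dbl π) id := by
    ext d e
    simp only [Matrix.submatrix_apply, Matrix.of_apply, id]
    rcases lo_hi_cases d with ⟨l, rfl⟩ | ⟨l, rfl⟩
    · rw [intl_lo, dbl_lo, intl_lo]
    · rw [intl_hi, dbl_hi, intl_hi]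
  rw [hmat, Matrix.det_permute, sign_dbl]
  simp

end S9
namespace S9

variable {n : ℕ}

lemma sum3 {m : ℕ} (c : Fin m → ℂ) (u : Fin m → Fin n → ℂ) (y z : Fin n → ℂ) :
    ∑ s, c s * ((∑ j, u s j * y j) * (∑ l2, (starRingEnd ℂ) (u s l2) * z l2))
    = ∑ j, ∑ l2, (∑ s, c s * (u s j * (starRingEnd ℂ) (u s l2))) * (y j * z l2) := by
  have L : ∑ s, c s * ((∑ j, u s j * y j) * (∑ l2, (starRingEnd ℂ) (u s l2) * z l2))
      = ∑ s, ∑ j, ∑ l2, c s * (u s j * y j * ((starRingEnd ℂ) (u s l2) * z l2)) := by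
    refine Finset.sum_congr rfl fun s _ => ?_
    rw [Finset.sum_mul_sum, Finset.mul_sum]
    refine Finset.sum_congr rfl fun j _ => ?_
    rw [Finset.mul_sum]
  rw [L, Finset.sum_comm]
  refine Finset.sum_congr rfl fun j _ => ?_
  rw [Finset.sum_comm]
  refine Finset.sum_congr rfl fun l2 _ => ?_
  rw [Finset.sum_mul]
  refine Finset.sum_congr rfl fun s _ => ?_
  ring

lemma nu_decomp (H : Matrix (Fin n) (Fin n) ℂ) (U : Matrix (Fin n) (Fin n) ℂ) (lam : Fin n → ℝ)
    (hspec : ∀ j l2, H j l2 = ∑ s, (lam s : ℂ) * (U j s * (starRingEnd ℂ) (U l2 s)))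
    (w : Fin 2 → CVec n) :
    (-Complex.I) * ∑ j, ∑ l, H j l *
        ((w 0).1 j * (starRingEnd ℂ) ((w 1).2 l) -
          (w 1).1 j * (starRingEnd ℂ) ((w 0).2 l))
    = -Complex.I * ∑ s, (lam s : ℂ) *
        (hol (fun a => U a s) (w 0) * antihol (fun a => U a s) (w 1)
          - hol (fun a => U a s) (w 1) * antihol (fun a => U a s) (w 0)) := by
  congr 1
  have R : ∑ s, (lam s : ℂ) *
      (hol (fun a => U a s) (w 0) * antihol (fun a => U a s) (w 1)
        - hol (fun a => U a s) (w 1) * antihol (fun a => U a s) (w 0))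
      = (∑ s, (lam s : ℂ) * (hol (fun a => U a s) (w 0) * antihol (fun a => U a s) (w 1)))
      - ∑ s, (lam s : ℂ) * (hol (fun a => U a s) (w 1) * antihol (fun a => U a s) (w 0)) := by
    rw [← Finset.sum_sub_distrib]
    exact Finset.sum_congr rfl fun s _ => by ring
  rw [R]
  have e1 : ∑ s, (lam s : ℂ) * (hol (fun a => U a s) (w 0) * antihol (fun a => U a s) (w 1))
      = ∑ j, ∑ l2, (∑ s, (lam s:ℂ) * (U j s * (starRingEnd ℂ) (U l2 s))) *
          ((w 0).1 j * (starRingEnd ℂ) ((w 1).2 l2)) := by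
    have := sum3 (fun s => (lam s : ℂ)) (fun s => fun a => U a s)
      (fun j => (w 0).1 j) (fun l2 => (starRingEnd ℂ) ((w 1).2 l2))
    simpa [hol, antihol] using this
  have e2 : ∑ s, (lam s : ℂ) * (hol (fun a => U a s) (w 1) * antihol (fun a => U a s) (w 0))
      = ∑ j, ∑ l2, (∑ s, (lam s:ℂ) * (U j s * (starRingEnd ℂ) (U l2 s))) *
          ((w 1).1 j * (starRingEnd ℂ) ((w 0).2 l2)) := by
    have := sum3 (fun s => (lam s : ℂ)) (fun s => fun a => U a s)
      (fun j => (w 1).1 j) (fun l2 => (starRingEnd ℂ) ((w 0).2 l2))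
    simpa [hol, antihol] using this
  rw [e1, e2, ← Finset.sum_sub_distrib]
  refine Finset.sum_congr rfl fun j _ => ?_
  rw [← Finset.sum_sub_distrib]
  refine Finset.sum_congr rfl fun l2 _ => ?_
  rw [hspec j l2]
  ring

lemma hol_single (j : Fin n) (vv : CVec n) : hol (Pi.single j 1) vv = vv.1 j := by
  simp [hol, Pi.single_apply, ite_mul]

lemma antihol_single (j : Fin n) (vv : CVec n) :
    antihol (Pi.single j 1) vv = (starRingEnd ℂ) (vv.2 j) := by
  simp [antihol, Pi.single_apply, apply_ite, ite_mul]

lemma monoP_single (j : Fin n) (w : Fin 2 → CVec n) :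
    monoP (fun _ : Fin 1 => (Pi.single j 1 : Fin n → ℂ)) w
    = -Complex.I * ((w 0).1 j * (starRingEnd ℂ) ((w 1).2 j)
        - (w 1).1 j * (starRingEnd ℂ) ((w 0).2 j)) := by
  unfold monoP
  rw [Matrix.det_fin_two]
  have h00 : ∀ e : Fin (2*1), (Matrix.of fun d e : Fin (2*1) =>
      intl (fun _ : Fin 1 => hol (Pi.single j 1)) (fun _ : Fin 1 => antihol (Pi.single j 1)) d (w e))
      (0 : Fin 2) e = (w e).1 j := by
    intro e
    show intl (fun _ : Fin 1 => hol (Pi.single j 1)) (fun _ : Fin 1 => antihol (Pi.single j 1))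
      (0 : Fin 2) (w e) = _
    rw [show ((0 : Fin 2)) = lo (0 : Fin 1) from rfl, intl_lo, hol_single]
  have h11 : ∀ e : Fin (2*1), (Matrix.of fun d e : Fin (2*1) =>
      intl (fun _ : Fin 1 => hol (Pi.single j 1)) (fun _ : Fin 1 => antihol (Pi.single j 1)) d (w e))
      (1 : Fin 2) e = (starRingEnd ℂ) ((w e).2 j) := by
    intro e
    show intl (fun _ : Fin 1 => hol (Pi.single j 1)) (fun _ : Fin 1 => antihol (Pi.single j 1))
      (1 : Fin 2) (w e) = _
    rw [show ((1 : Fin 2)) = hi (0 : Fin 1) from rfl, intl_hi, antihol_single]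
  rw [h00 0, h00 1, h11 0, h11 1]
  ring

lemma omega_decomp (U : Matrix (Fin n) (Fin n) ℂ)
    (hFd : ∀ a b, ∑ s, U a s * (starRingEnd ℂ) (U b s) = if a = b then (1:ℂ) else 0)
    (w : Fin 2 → CVec n) :
    (∑ j, monoP (fun _ : Fin 1 => (Pi.single j 1 : Fin n → ℂ)) w)
    = -Complex.I * ∑ s, (1:ℂ) *
        (hol (fun a => U a s) (w 0) * antihol (fun a => U a s) (w 1)
          - hol (fun a => U a s) (w 1) * antihol (fun a => U a s) (w 0)) := by
  have R : ∑ s, (1 : ℂ) *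
      (hol (fun a => U a s) (w 0) * antihol (fun a => U a s) (w 1)
        - hol (fun a => U a s) (w 1) * antihol (fun a => U a s) (w 0))
      = (∑ s, (1 : ℂ) * (hol (fun a => U a s) (w 0) * antihol (fun a => U a s) (w 1)))
      - ∑ s, (1 : ℂ) * (hol (fun a => U a s) (w 1) * antihol (fun a => U a s) (w 0)) := by
    rw [← Finset.sum_sub_distrib]
    exact Finset.sum_congr rfl fun s _ => by ring
  rw [R]
  have e1 : ∑ s, (1 : ℂ) * (hol (fun a => U a s) (w 0) * antihol (fun a => U a s) (w 1))
      = ∑ j, ((w 0).1 j * (starRingEnd ℂ) ((w 1).2 j)) := by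
    have := sum3 (fun _ => (1 : ℂ)) (fun s => fun a => U a s)
      (fun j => (w 0).1 j) (fun l2 => (starRingEnd ℂ) ((w 1).2 l2))
    simp only [hol, antihol] at this ⊢
    rw [this]
    refine Finset.sum_congr rfl fun j _ => ?_
    have hone : ∀ l2 : Fin n, (∑ s, (1:ℂ) * (U j s * (starRingEnd ℂ) (U l2 s)))
        = if j = l2 then (1:ℂ) else 0 := fun l2 => by rw [← hFd j l2]; simp
    simp only [hone]
    simp
  have e2 : ∑ s, (1 : ℂ) * (hol (fun a => U a s) (w 1) * antihol (fun a => U a s) (w 0))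
      = ∑ j, ((w 1).1 j * (starRingEnd ℂ) ((w 0).2 j)) := by
    have := sum3 (fun _ => (1 : ℂ)) (fun s => fun a => U a s)
      (fun j => (w 1).1 j) (fun l2 => (starRingEnd ℂ) ((w 0).2 l2))
    simp only [hol, antihol] at this ⊢
    rw [this]
    refine Finset.sum_congr rfl fun j _ => ?_
    have hone : ∀ l2 : Fin n, (∑ s, (1:ℂ) * (U j s * (starRingEnd ℂ) (U l2 s)))
        = if j = l2 then (1:ℂ) else 0 := fun l2 => by rw [← hFd j l2]; simp
    simp only [hone]
    simp
  rw [e1, e2]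
  have hms : ∀ j : Fin n, monoP (fun _ : Fin 1 => (Pi.single j 1 : Fin n → ℂ)) w
      = -Complex.I * ((w 0).1 j * (starRingEnd ℂ) ((w 1).2 j)
        - (w 1).1 j * (starRingEnd ℂ) ((w 0).2 j)) := fun j => monoP_single j w
  simp only [hms]
  rw [← Finset.sum_sub_distrib, Finset.mul_sum]

end S9
namespace S9

variable {n : ℕ}

lemma spec_entry (H : Matrix (Fin n) (Fin n) ℂ) (hH : H.IsHermitian) (j l2 : Fin n) :
    H j l2 = ∑ s, (hH.eigenvalues s : ℂ) *
      ((hH.eigenvectorUnitary : Matrix (Fin n) (Fin n) ℂ) j s *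
        (starRingEnd ℂ) ((hH.eigenvectorUnitary : Matrix (Fin n) (Fin n) ℂ) l2 s)) := by
  have h2 := congrFun (congrFun hH.spectral_theorem j) l2
  rw [h2, Unitary.conjStarAlgAut_apply, Matrix.mul_apply]
  refine Finset.sum_congr rfl fun s _ => ?_
  rw [Matrix.mul_diagonal]
  simp only [Matrix.star_apply, RCLike.star_def, Function.comp_apply]
  have : (RCLike.ofReal (hH.eigenvalues s) : ℂ) = ((hH.eigenvalues s : ℝ) : ℂ) := rfl
  rw [this]
  ring

lemma unitary_rows (H : Matrix (Fin n) (Fin n) ℂ) (hH : H.IsHermitian) (a b : Fin n) :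
    ∑ s, (hH.eigenvectorUnitary : Matrix (Fin n) (Fin n) ℂ) a s *
      (starRingEnd ℂ) ((hH.eigenvectorUnitary : Matrix (Fin n) (Fin n) ℂ) b s)
    = if a = b then (1:ℂ) else 0 := by
  set U := (hH.eigenvectorUnitary : Matrix (Fin n) (Fin n) ℂ) with hU
  have h1 : U * star U = 1 := Matrix.mem_unitaryGroup_iff.mp hH.eigenvectorUnitary.2
  have h2 : (U * star U) a b = (1 : Matrix (Fin n) (Fin n) ℂ) a b := by rw [h1]
  rw [Matrix.mul_apply] at h2
  simp only [Matrix.star_apply, RCLike.star_def] at h2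
  rw [h2, Matrix.one_apply]

lemma unitary_cols (H : Matrix (Fin n) (Fin n) ℂ) (hH : H.IsHermitian) (s t : Fin n) :
    ∑ a, (hH.eigenvectorUnitary : Matrix (Fin n) (Fin n) ℂ) a s *
      (starRingEnd ℂ) ((hH.eigenvectorUnitary : Matrix (Fin n) (Fin n) ℂ) a t)
    = if s = t then (1:ℂ) else 0 := by
  set U := (hH.eigenvectorUnitary : Matrix (Fin n) (Fin n) ℂ) with hU
  have h1 : star U * U = 1 := Matrix.mem_unitaryGroup_iff'.mp hH.eigenvectorUnitary.2
  have h2 : (star U * U) s t = (1 : Matrix (Fin n) (Fin n) ℂ) s t := by rw [h1]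
  rw [Matrix.mul_apply] at h2
  simp only [Matrix.star_apply, RCLike.star_def] at h2
  have h3 : ∑ a, U a s * (starRingEnd ℂ) (U a t)
      = (starRingEnd ℂ) (∑ a, (starRingEnd ℂ) (U a s) * U a t) := by
    rw [map_sum]
    exact Finset.sum_congr rfl fun a _ => by simp [mul_comm]
  rw [h3, h2, Matrix.one_apply]
  split <;> simp

end S9
namespace S9

variable {n k : ℕ}

lemma key_repr (H : Matrix (Fin n) (Fin n) ℂ) (hH : H.IsHermitian)
    (v : Fin (2*(k+1)) → CVec n) :
    wedge2s (k + 1) (Fin.cons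
      (fun v => (-Complex.I) * ∑ j, ∑ l, H j l *
        ((v 0).1 j * (starRingEnd ℂ) ((v 1).2 l) -
          (v 1).1 j * (starRingEnd ℂ) ((v 0).2 l)))
      (fun _ : Fin k => fun v =>
        ∑ j, monoP (fun _ : Fin 1 => (Pi.single j 1 : Fin n → ℂ)) v)) v
    = ∑ g : Fin (k+1) → Fin n, (hH.eigenvalues (g 0) : ℂ) *
        monoP (fun l => fun a => (hH.eigenvectorUnitary : Matrix (Fin n) (Fin n) ℂ) a (g l)) v := by
  have hbeta : ∀ (l : Fin (k+1)) (w : Fin 2 → CVec n),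
      (Fin.cons
        (fun v => (-Complex.I) * ∑ j, ∑ l, H j l *
          ((v 0).1 j * (starRingEnd ℂ) ((v 1).2 l) -
            (v 1).1 j * (starRingEnd ℂ) ((v 0).2 l)))
        (fun _ : Fin k => fun v =>
          ∑ j, monoP (fun _ : Fin 1 => (Pi.single j 1 : Fin n → ℂ)) v) : Fin (k+1) → (Fin 2 → CVec n) → ℂ) l w
      = -Complex.I * ∑ s,
          (Fin.cons (fun s => (hH.eigenvalues s : ℂ)) (fun _ _ => (1:ℂ)) : Fin (k+1) → Fin n → ℂ) l s *
          (hol (fun a => (hH.eigenvectorUnitary : Matrix (Fin n) (Fin n) ℂ) a s) (w 0) *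
            antihol (fun a => (hH.eigenvectorUnitary : Matrix (Fin n) (Fin n) ℂ) a s) (w 1)
          - hol (fun a => (hH.eigenvectorUnitary : Matrix (Fin n) (Fin n) ℂ) a s) (w 1) *
            antihol (fun a => (hH.eigenvectorUnitary : Matrix (Fin n) (Fin n) ℂ) a s) (w 0)) := by
    intro l w
    refine Fin.cases ?_ ?_ l
    · rw [Fin.cons_zero]
      have := nu_decomp H (hH.eigenvectorUnitary : Matrix (Fin n) (Fin n) ℂ) hH.eigenvalues
        (spec_entry H hH) w
      simp only [Fin.cons_zero]
      exact this
    · intro i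
      rw [Fin.cons_succ]
      have := omega_decomp (hH.eigenvectorUnitary : Matrix (Fin n) (Fin n) ℂ)
        (unitary_rows H hH) w
      simp only [Fin.cons_succ]
      exact this
  rw [wedge2s_diag _ _ _ hbeta v]
  refine Finset.sum_congr rfl fun g _ => ?_
  congr 1
  rw [Fin.prod_univ_succ]
  simp

end S9
namespace S9

variable {n k : ℕ}

lemma lo_injective {p : ℕ} : Function.Injective (lo : Fin p → Fin (2*p)) := by
  intro a b h
  have := congrArg Fin.val h
  simp only [lo] at this
  exact Fin.ext (by omega)

lemma monoP_zero_of_noninj {p : ℕ} (ξ : Fin p → Fin n → ℂ) {j1 j2 : Fin p}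
    (hne : j1 ≠ j2) (h : ξ j1 = ξ j2) (v : Fin (2*p) → CVec n) : monoP ξ v = 0 := by
  unfold monoP
  have hrow : (Matrix.of fun d e : Fin (2*p) =>
        intl (fun j => hol (ξ j)) (fun j => antihol (ξ j)) d (v e)) (lo j1)
      = (Matrix.of fun d e : Fin (2*p) =>
        intl (fun j => hol (ξ j)) (fun j => antihol (ξ j)) d (v e)) (lo j2) := by
    funext e
    show intl (fun j => hol (ξ j)) (fun j => antihol (ξ j)) (lo j1) (v e)
      = intl (fun j => hol (ξ j)) (fun j => antihol (ξ j)) (lo j2) (v e)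
    rw [intl_lo, intl_lo, h]
  rw [Matrix.det_zero_of_row_eq (fun hh => hne (lo_injective hh)) hrow, mul_zero]

lemma normSq_det_perm {p : ℕ} (g : Fin p → Fin n) (hg : Function.Injective g)
    (π : Equiv.Perm (Fin p)) :
    Complex.normSq ((Matrix.of fun j e : Fin p => if g (π j) = g e then (1:ℂ) else 0).det) = 1 := by
  have hmat : (Matrix.of fun j e : Fin p => if g (π j) = g e then (1:ℂ) else 0)
      = π.permMatrix ℂ := by
    ext j e
    simp [Matrix.of_apply, Equiv.Perm.permMatrix, PEquiv.toMatrix_apply, Equiv.toPEquiv_apply,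
      hg.eq_iff, eq_comm]
  rw [hmat, Matrix.det_permutation]
  rcases Int.units_eq_one_or (Equiv.Perm.sign π) with h | h <;> simp [h]

lemma det_delta_vanish {p : ℕ} (g t : Fin p → Fin n)
    (h : ¬ ∃ π : Equiv.Perm (Fin p), t = g ∘ π) :
    (Matrix.of fun j e : Fin p => if t j = g e then (1:ℂ) else 0).det = 0 := by
  classical
  by_cases ht : Function.Injective t
  · by_cases hall : ∀ j, ∃ e, t j = g e
    · exfalso
      choose φ hφ using hall
      have hφinj : Function.Injective φ := by
        intro a b hab
        apply ht
        rw [hφ a, hφ b, hab]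
      have hbij : Function.Bijective φ := Finite.injective_iff_bijective.mp hφinj
      exact h ⟨Equiv.ofBijective φ hbij, funext fun l => hφ l⟩
    · push_neg at hall
      obtain ⟨j, hj⟩ := hall
      refine Matrix.det_eq_zero_of_row_eq_zero j fun e => ?_
      simp [Matrix.of_apply, hj e]
  · rw [Function.not_injective_iff] at ht
    obtain ⟨a, b, hab, hne⟩ := ht
    refine Matrix.det_zero_of_row_eq hne ?_
    funext e
    simp [Matrix.of_apply, hab]

end S9

open scoped ComplexOrder in
theorem stmt_9' {n k : ℕ} (H : Matrix (Fin n) (Fin n) ℂ) (hH : H.IsHermitian) :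
    WeakPos (k + 1) (wedge2s (k + 1) (Fin.cons
      (fun v => (-Complex.I) * ∑ j, ∑ l, H j l *
        ((v 0).1 j * (starRingEnd ℂ) ((v 1).2 l) -
          (v 1).1 j * (starRingEnd ℂ) ((v 0).2 l)))
      (fun _ : Fin k => fun v =>
        ∑ j, monoP (fun _ : Fin 1 => (Pi.single j 1 : Fin n → ℂ)) v))) ↔
    StrongPos (k + 1) (wedge2s (k + 1) (Fin.cons
      (fun v => (-Complex.I) * ∑ j, ∑ l, H j l *
        ((v 0).1 j * (starRingEnd ℂ) ((v 1).2 l) -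
          (v 1).1 j * (starRingEnd ℂ) ((v 0).2 l)))
      (fun _ : Fin k => fun v =>
        ∑ j, monoP (fun _ : Fin 1 => (Pi.single j 1 : Fin n → ℂ)) v))) := by
  classical
  constructor
  · -- weak ⇒ strong
    intro hw
    set U := (hH.eigenvectorUnitary : Matrix (Fin n) (Fin n) ℂ) with hU
    set lam := hH.eigenvalues with hlam
    set cg : (Fin (k+1) → Fin n) → ℝ := fun g =>
      if Function.Injective g then
        ((Nat.factorial (k+1) : ℝ))⁻¹ * ∑ π : Equiv.Perm (Fin (k+1)), lam (g (π 0))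
      else 0 with hcg
    -- pairing matrix is a 0/1 selection matrix
    have hPM : ∀ (t g : Fin (k+1) → Fin n),
        S9.pairMat (fun l a => U a (t l)) (fun e a => (starRingEnd ℂ) (U a (g e)))
        = Matrix.of fun j e => if t j = g e then (1:ℂ) else 0 := by
      intro t g
      ext j e
      show (∑ a2, U a2 (t j) * (starRingEnd ℂ) (U a2 (g e))) = _
      rw [S9.unitary_cols H hH (t j) (g e)]
      simp
    -- coefficients are nonnegative, by weak positivity
    have hnonneg : ∀ g, 0 ≤ cg g := by
      intro g
      have hcgdef : cg g = if Function.Injective g then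
          ((Nat.factorial (k+1) : ℝ))⁻¹ * ∑ π : Equiv.Perm (Fin (k+1)), lam (g (π 0))
        else 0 := rfl
      rw [hcgdef]
      by_cases hg : Function.Injective g
      · rw [if_pos hg]
        refine mul_nonneg (by positivity) ?_
        have hx := hw (fun e => fun a => (starRingEnd ℂ) (U a (g e)))
        set w0 := intl (fun j => (((fun e => fun a => (starRingEnd ℂ) (U a (g e))) j, 0) : CVec n))
          (fun j => ((0, (fun e => fun a => (starRingEnd ℂ) (U a (g e))) j) : CVec n)) with hw0
        have e1 : Complex.I ^ (k+1) * (wedge2s (k + 1) (Fin.cons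
            (fun v => (-Complex.I) * ∑ j, ∑ l, H j l *
              ((v 0).1 j * (starRingEnd ℂ) ((v 1).2 l) -
                (v 1).1 j * (starRingEnd ℂ) ((v 0).2 l)))
            (fun _ : Fin k => fun v =>
              ∑ j, monoP (fun _ : Fin 1 => (Pi.single j 1 : Fin n → ℂ)) v))) w0
            = ∑ t : Fin (k+1) → Fin n, (lam (t 0) : ℂ) *
                ((Complex.normSq ((Matrix.of fun j e =>
                  if t j = g e then (1:ℂ) else 0).det) : ℝ) : ℂ) := by
          rw [S9.key_repr H hH w0, Finset.mul_sum]
          refine Finset.sum_congr rfl fun t _ => ?_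
          rw [← hPM t g, ← S9.monoP_eval (fun l a => U a (t l))
            (fun e a => (starRingEnd ℂ) (U a (g e)))]
          ring
        rw [e1] at hx
        have e2 : ∑ t : Fin (k+1) → Fin n, (lam (t 0) : ℂ) *
              ((Complex.normSq ((Matrix.of fun j e =>
                if t j = g e then (1:ℂ) else 0).det) : ℝ) : ℂ)
            = ((∑ π : Equiv.Perm (Fin (k+1)), lam (g (π 0)) : ℝ) : ℂ) := by
          rw [← Finset.sum_filter_add_sum_filter_not Finset.univ
            (fun t : Fin (k+1) → Fin n => ∃ π : Equiv.Perm (Fin (k+1)), t = g ∘ π)]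
          have hzero : ∑ t ∈ Finset.univ.filter
              (fun t : Fin (k+1) → Fin n => ¬ ∃ π : Equiv.Perm (Fin (k+1)), t = g ∘ π),
              (lam (t 0) : ℂ) * ((Complex.normSq ((Matrix.of fun j e =>
                if t j = g e then (1:ℂ) else 0).det) : ℝ) : ℂ) = 0 := by
            refine Finset.sum_eq_zero fun t ht => ?_
            rw [S9.det_delta_vanish g t (Finset.mem_filter.mp ht).2]
            simp
          rw [hzero, add_zero]
          have himg : Finset.univ.filter
              (fun t : Fin (k+1) → Fin n => ∃ π : Equiv.Perm (Fin (k+1)), t = g ∘ π)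
              = Finset.image (fun π : Equiv.Perm (Fin (k+1)) => g ∘ π) Finset.univ := by
            ext t
            simp only [Finset.mem_filter, Finset.mem_univ, true_and, Finset.mem_image]
            constructor
            · rintro ⟨π, rfl⟩; exact ⟨π, rfl⟩
            · rintro ⟨π, rfl⟩; exact ⟨π, rfl⟩
          have hinj : ∀ π1 ∈ Finset.univ, ∀ π2 ∈ Finset.univ,
              (fun π : Equiv.Perm (Fin (k+1)) => g ∘ π) π1
                = (fun π : Equiv.Perm (Fin (k+1)) => g ∘ π) π2 → π1 = π2 := by
            intro π1 _ π2 _ hh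
            ext l
            exact congrArg Fin.val (hg (congrFun hh l))
          rw [himg, Finset.sum_image hinj, Complex.ofReal_sum]
          refine Finset.sum_congr rfl fun π _ => ?_
          have hns := S9.normSq_det_perm g hg π
          show (lam (g (π 0)) : ℂ) * ((Complex.normSq ((Matrix.of fun j e =>
            if g (π j) = g e then (1:ℂ) else 0).det) : ℝ) : ℂ) = _
          rw [hns]
          simp
        rw [e2] at hx
        exact Complex.zero_le_real.mp hx
      · rw [if_neg hg]
    -- representation with the symmetrized coefficients
    have hmono0 : ∀ (g : Fin (k+1) → Fin n), ¬ Function.Injective g →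
        ∀ v, monoP (fun l a => U a (g l)) v = 0 := by
      intro g hg v
      rw [Function.not_injective_iff] at hg
      obtain ⟨a, b, hab, hne⟩ := hg
      exact S9.monoP_zero_of_noninj _ hne (by rw [hab]) v
    have havg : ∀ (π : Equiv.Perm (Fin (k+1))) (v : Fin (2*(k+1)) → CVec n),
        (∑ g : Fin (k+1) → Fin n, (lam (g 0) : ℂ) * monoP (fun l a => U a (g l)) v)
        = ∑ g : Fin (k+1) → Fin n, (lam (g (π 0)) : ℂ) * monoP (fun l a => U a (g l)) v := by
      intro π v
      refine (Fintype.sum_bijective (fun x : Fin (k+1) → Fin n => x ∘ π) ?_ _ _ ?_).symm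
      · exact (Equiv.arrowCongr π.symm (Equiv.refl (Fin n))).bijective
      · intro x
        show (lam (x (π 0)) : ℂ) * monoP (fun l a => U a (x l)) v
          = (lam (x (π 0)) : ℂ) * monoP (fun l a => U a (x (π l))) v
        exact congrArg (fun z => ((lam (x (π 0)) : ℝ) : ℂ) * z)
          (S9.monoP_perm (fun l a => U a (x l)) π v).symm
    have hfact : ((Nat.factorial (k+1) : ℂ)) ≠ 0 := by
      exact_mod_cast Nat.factorial_ne_zero (k+1)
    have hrepr : ∀ v : Fin (2*(k+1)) → CVec n,
        wedge2s (k + 1) (Fin.cons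
          (fun v => (-Complex.I) * ∑ j, ∑ l, H j l *
            ((v 0).1 j * (starRingEnd ℂ) ((v 1).2 l) -
              (v 1).1 j * (starRingEnd ℂ) ((v 0).2 l)))
          (fun _ : Fin k => fun v =>
            ∑ j, monoP (fun _ : Fin 1 => (Pi.single j 1 : Fin n → ℂ)) v)) v
        = ∑ g : Fin (k+1) → Fin n, (cg g : ℂ) * monoP (fun l a => U a (g l)) v := by
      intro v
      rw [S9.key_repr H hH v]
      have hscaled : (Nat.factorial (k+1) : ℂ) *
          (∑ g : Fin (k+1) → Fin n, (lam (g 0) : ℂ) * monoP (fun l a => U a (g l)) v)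
          = ∑ g : Fin (k+1) → Fin n,
              (∑ π : Equiv.Perm (Fin (k+1)), (lam (g (π 0)) : ℂ)) *
                monoP (fun l a => U a (g l)) v := by
        have hcardp : (Finset.univ : Finset (Equiv.Perm (Fin (k+1)))).card
            = Nat.factorial (k+1) := by
          rw [Finset.card_univ, Fintype.card_perm, Fintype.card_fin]
        calc (Nat.factorial (k+1) : ℂ) *
            (∑ g : Fin (k+1) → Fin n, (lam (g 0) : ℂ) * monoP (fun l a => U a (g l)) v)
            = ∑ π : Equiv.Perm (Fin (k+1)),
                (∑ g : Fin (k+1) → Fin n, (lam (g 0) : ℂ) * monoP (fun l a => U a (g l)) v) := by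
              rw [Finset.sum_const, hcardp, nsmul_eq_mul]
          _ = ∑ π : Equiv.Perm (Fin (k+1)), ∑ g : Fin (k+1) → Fin n,
                (lam (g (π 0)) : ℂ) * monoP (fun l a => U a (g l)) v :=
              Finset.sum_congr rfl fun π _ => havg π v
          _ = ∑ g : Fin (k+1) → Fin n,
              (∑ π : Equiv.Perm (Fin (k+1)), (lam (g (π 0)) : ℂ)) *
                monoP (fun l a => U a (g l)) v := by
              rw [Finset.sum_comm]
              refine Finset.sum_congr rfl fun g _ => ?_
              rw [Finset.sum_mul]
      have hF : (∑ g : Fin (k+1) → Fin n, (lam (g 0) : ℂ) * monoP (fun l a => U a (g l)) v)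
          = ∑ g : Fin (k+1) → Fin n,
              ((Nat.factorial (k+1) : ℂ))⁻¹ * (∑ π : Equiv.Perm (Fin (k+1)), (lam (g (π 0)) : ℂ)) *
                monoP (fun l a => U a (g l)) v := by
        have h1 : ∑ g : Fin (k+1) → Fin n,
            ((Nat.factorial (k+1) : ℂ))⁻¹ * (∑ π : Equiv.Perm (Fin (k+1)), (lam (g (π 0)) : ℂ)) *
              monoP (fun l a => U a (g l)) v
            = ((Nat.factorial (k+1) : ℂ))⁻¹ * ∑ g : Fin (k+1) → Fin n,
              (∑ π : Equiv.Perm (Fin (k+1)), (lam (g (π 0)) : ℂ)) *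
                monoP (fun l a => U a (g l)) v := by
          rw [Finset.mul_sum]
          exact Finset.sum_congr rfl fun g _ => by ring
        rw [h1, ← hscaled, ← mul_assoc, inv_mul_cancel₀ hfact, one_mul]
      rw [hF]
      refine Finset.sum_congr rfl fun g _ => ?_
      by_cases hg : Function.Injective g
      · have hcgdef : cg g = if Function.Injective g then
            ((Nat.factorial (k+1) : ℝ))⁻¹ * ∑ π : Equiv.Perm (Fin (k+1)), lam (g (π 0))
          else 0 := rfl
        rw [hcgdef, if_pos hg]
        push_cast
        ring
      · rw [hmono0 g hg v, mul_zero, mul_zero]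
    refine ⟨Fintype.card (Fin (k+1) → Fin n),
      fun t => cg ((Fintype.equivFin (Fin (k+1) → Fin n)).symm t),
      fun t => (fun l a => U a (((Fintype.equivFin (Fin (k+1) → Fin n)).symm t) l)),
      fun t => hnonneg _, ?_⟩
    funext v
    rw [hrepr v]
    exact (Equiv.sum_comp (Fintype.equivFin (Fin (k+1) → Fin n)).symm
      (fun g => (cg g : ℂ) * monoP (fun l a => U a (g l)) v)).symm
  · -- strong ⇒ weak
    rintro ⟨m, c, ξ, hc, hFeq⟩ x
    rw [hFeq]
    show 0 ≤ Complex.I ^ (k+1) * ∑ t, (c t : ℂ) * monoP (ξ t)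
      (intl (fun j => ((x j, 0) : CVec n)) (fun j => ((0, x j) : CVec n)))
    have e1 : Complex.I ^ (k+1) * ∑ t, (c t : ℂ) * monoP (ξ t)
        (intl (fun j => ((x j, 0) : CVec n)) (fun j => ((0, x j) : CVec n)))
        = ∑ t, (c t : ℂ) * ((Complex.normSq ((S9.pairMat (ξ t) x).det) : ℝ) : ℂ) := by
      rw [Finset.mul_sum]
      refine Finset.sum_congr rfl fun t _ => ?_
      rw [← S9.monoP_eval (ξ t) x]
      ring
    rw [e1]
    refine Finset.sum_nonneg fun t _ => mul_nonneg ?_ ?_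
    · exact Complex.zero_le_real.mpr (hc t)
    · exact Complex.zero_le_real.mpr (Complex.normSq_nonneg _)

/-- Let `ω` be the standard Kähler form of `ℂⁿ` and `ν` a real
(1,1)-form, encoded by its Hermitian coefficient matrix `H` (reality of `ν` =
Hermitian symmetry of `H`): `ν = −i ∑ H_{jl} ξ_j ∧ ξ̄_l`.  For any `k ≥ 0`, the
`(k+1,k+1)`-form `ν ∧ ω^k` is weakly positive iff it is strongly positive. -/
theorem stmt_9 {n k : ℕ} (H : Matrix (Fin n) (Fin n) ℂ) (hH : H.IsHermitian) :
    WeakPos (k + 1) (wedge2s (k + 1) (Fin.cons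
      (fun v => (-Complex.I) * ∑ j, ∑ l, H j l *
        ((v 0).1 j * (starRingEnd ℂ) ((v 1).2 l) -
          (v 1).1 j * (starRingEnd ℂ) ((v 0).2 l)))
      (fun _ : Fin k => fun v =>
        ∑ j, monoP (fun _ : Fin 1 => (Pi.single j 1 : Fin n → ℂ)) v))) ↔
    StrongPos (k + 1) (wedge2s (k + 1) (Fin.cons
      (fun v => (-Complex.I) * ∑ j, ∑ l, H j l *
        ((v 0).1 j * (starRingEnd ℂ) ((v 1).2 l) -
          (v 1).1 j * (starRingEnd ℂ) ((v 0).2 l)))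
      (fun _ : Fin k => fun v =>
        ∑ j, monoP (fun _ : Fin 1 => (Pi.single j 1 : Fin n → ℂ)) v))) := by
  exact stmt_9' H hH
end

section
/- Let φ : Ω → ℝ be a C² function on an open set Ω ⊆ ℂⁿ. Then at each point, the condition that the sum of the q smallest eigenvalues of the complex Hessian of φ is nonnegative is equivalent to: for every complex q-dimensional affine subspace L through that point, the restriction of φ to L ∩ Ω has nonnegative Laplacian at that point (with respect to the induced flat metric on L). -/
/-- The complex Hessian `(∂²φ/∂z_j∂z̄_k)` of a real-valued function `φ` on `ℂⁿ`,
expressed through the real second derivative `B = D²φ` via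
`H_{jk} = (1/4)(B(e_j,e_k) + B(ie_j,ie_k) + i·(B(e_j,ie_k) − B(ie_j,e_k)))`. -/
noncomputable def cHess {n : ℕ} (φ : (Fin n → ℂ) → ℝ) (z : Fin n → ℂ) :
    Matrix (Fin n) (Fin n) ℂ :=
  Matrix.of fun j k =>
    let B : (Fin n → ℂ) → (Fin n → ℂ) → ℝ := fun v w => iteratedFDeriv ℝ 2 φ z ![v, w]
    let e : Fin n → Fin n → ℂ := fun i => Pi.single i 1
    (1 / 4 : ℂ) *
      (((B (e j) (e k) + B (Complex.I • e j) (Complex.I • e k) : ℝ) : ℂ) +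
        Complex.I * ((B (e j) (Complex.I • e k) - B (Complex.I • e j) (e k) : ℝ) : ℂ))

section Aux

/-- Core weighted inequality (Ky Fan type): if `S` consists of indices of smallest values and
the weights `w` lie in `[0,1]` with total mass `S.card`, then `∑_{i∈S} λ i ≤ ∑ i, λ i * w i`. -/
lemma kyfan_core {n : ℕ} (lam : Fin n → ℝ) (S : Finset (Fin n)) (hS : S.Nonempty)
    (hmin : ∀ i ∈ S, ∀ j, j ∉ S → lam i ≤ lam j)
    (w : Fin n → ℝ) (hw0 : ∀ i, 0 ≤ w i) (hw1 : ∀ i, w i ≤ 1)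
    (hsum : ∑ i, w i = (S.card : ℝ)) :
    ∑ i ∈ S, lam i ≤ ∑ i, lam i * w i := by
  obtain ⟨i0, hi0, ht⟩ := S.exists_max_image lam hS
  set t := lam i0 with htdef
  have h2 : ∀ j ∈ Sᶜ, t ≤ lam j := fun j hj => hmin i0 hi0 j (by simpa using hj)
  have e1 : ∑ i ∈ S, lam i * w i + ∑ i ∈ Sᶜ, lam i * w i = ∑ i, lam i * w i :=
    Finset.sum_add_sum_compl S _
  have e2 : ∑ i ∈ S, w i + ∑ i ∈ Sᶜ, w i = ∑ i, w i := Finset.sum_add_sum_compl S w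
  have key1 : ∑ i ∈ S, lam i * (1 - w i) ≤ ∑ i ∈ S, t * (1 - w i) :=
    Finset.sum_le_sum fun i hi =>
      mul_le_mul_of_nonneg_right (ht i hi) (by linarith [hw1 i])
  have key2 : ∑ j ∈ Sᶜ, t * w j ≤ ∑ j ∈ Sᶜ, lam j * w j :=
    Finset.sum_le_sum fun j hj => mul_le_mul_of_nonneg_right (h2 j hj) (hw0 j)
  have e3 : ∑ i ∈ S, lam i * (1 - w i) = ∑ i ∈ S, lam i - ∑ i ∈ S, lam i * w i := by
    rw [← Finset.sum_sub_distrib]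
    exact Finset.sum_congr rfl fun i _ => by ring
  have e4 : ∑ i ∈ S, t * (1 - w i) = t * S.card - t * ∑ i ∈ S, w i := by
    rw [← Finset.mul_sum, Finset.sum_sub_distrib, Finset.sum_const, nsmul_eq_mul, mul_one,
      mul_sub]
  have e5 : ∑ j ∈ Sᶜ, t * w j = t * ∑ j ∈ Sᶜ, w j := by rw [Finset.mul_sum]
  have e6 : t * ∑ j ∈ Sᶜ, w j = t * S.card - t * ∑ i ∈ S, w i := by
    have h7 : ∑ j ∈ Sᶜ, w j = (S.card : ℝ) - ∑ i ∈ S, w i := by linarith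
    rw [h7]; ring
  linarith

/-- There is a subset of cardinality `q` consisting of indices of the `q` smallest values. -/
lemma exists_min_subset {n q : ℕ} (hqn : q ≤ n) (lam : Fin n → ℝ) :
    ∃ S : Finset (Fin n), S.card = q ∧ (∀ i ∈ S, ∀ j, j ∉ S → lam i ≤ lam j) := by
  have hne : ((Finset.univ : Finset (Fin n)).powersetCard q).Nonempty := by
    rw [Finset.powersetCard_nonempty]; simpa using hqn
  obtain ⟨S, hSmem, hSmin⟩ :=
    Finset.exists_min_image _ (fun s => ∑ i ∈ s, lam i) hne
  rw [Finset.mem_powersetCard] at hSmem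
  refine ⟨S, hSmem.2, fun i hi j hj => ?_⟩
  by_contra hlt
  push_neg at hlt
  have hjnotin : j ∉ S.erase i := fun h => hj (Finset.mem_of_mem_erase h)
  set S' : Finset (Fin n) := insert j (S.erase i) with hS'
  have hcard : S'.card = q := by
    rw [hS', Finset.card_insert_of_notMem hjnotin, Finset.card_erase_of_mem hi, hSmem.2]
    have h1 : 1 ≤ q := by
      rw [← hSmem.2]
      exact Finset.card_pos.2 ⟨i, hi⟩
    omega
  have hmem' : S' ∈ (Finset.univ : Finset (Fin n)).powersetCard q := by
    rw [Finset.mem_powersetCard]; exact ⟨Finset.subset_univ _, hcard⟩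
  have hsum' : ∑ k ∈ S', lam k = lam j + (∑ k ∈ S, lam k - lam i) := by
    rw [hS', Finset.sum_insert hjnotin]
    have := Finset.add_sum_erase S lam hi
    linarith
  have := hSmin S' hmem'
  simp only [hsum'] at this
  linarith

/-- A Hermitian matrix acts on its eigenvector basis by scaling with eigenvalues. -/
lemma eig_apply {n : ℕ} (M : Matrix (Fin n) (Fin n) ℂ) (hM : M.IsHermitian) (i : Fin n) :
    Matrix.toEuclideanLin M (hM.eigenvectorBasis i) =
      (hM.eigenvalues i : ℂ) • hM.eigenvectorBasis i := by
  have h := hM.mulVec_eigenvectorBasis i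
  ext a
  have := congrFun h a
  simpa [Matrix.toEuclideanLin_apply, Complex.real_smul] using this

/-- Parseval for an orthonormal basis of `EuclideanSpace`. -/
lemma norm_repr_sq_sum {n : ℕ} (b : OrthonormalBasis (Fin n) ℂ (EuclideanSpace ℂ (Fin n)))
    (x : EuclideanSpace ℂ (Fin n)) : ∑ i, ‖b.repr x i‖ ^ 2 = ‖x‖ ^ 2 := by
  have h1 : ‖b.repr x‖ = ‖x‖ := b.repr.norm_map x
  have h2 : ‖b.repr x‖ = Real.sqrt (∑ i, ‖b.repr x i‖ ^ 2) := EuclideanSpace.norm_eq _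
  rw [← h1, h2, Real.sq_sqrt]
  exact Finset.sum_nonneg fun i _ => sq_nonneg _

/-- The quadratic form of a Hermitian matrix in terms of eigenvalues. -/
lemma inner_eig {n : ℕ} (M : Matrix (Fin n) (Fin n) ℂ) (hM : M.IsHermitian)
    (x : EuclideanSpace ℂ (Fin n)) :
    (inner (𝕜 := ℂ) (Matrix.toEuclideanLin M x) x).re
      = ∑ i, hM.eigenvalues i * ‖hM.eigenvectorBasis.repr x i‖ ^ 2 := by
  set b := hM.eigenvectorBasis with hb
  set c : Fin n → ℂ := fun i => b.repr x i with hc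
  have hx : ∑ i, c i • b i = x := b.sum_repr x
  have hTx : Matrix.toEuclideanLin M x = ∑ i, (c i * (hM.eigenvalues i : ℂ)) • b i := by
    conv_lhs => rw [← hx]
    rw [map_sum]
    refine Finset.sum_congr rfl fun i _ => ?_
    rw [map_smul, eig_apply M hM i, smul_smul]
  rw [hTx, sum_inner]
  have hterm : ∀ i, (inner (𝕜 := ℂ) ((c i * (hM.eigenvalues i : ℂ)) • b i) x)
      = ((hM.eigenvalues i * ‖c i‖ ^ 2 : ℝ) : ℂ) := by
    intro i
    rw [inner_smul_left, map_mul, Complex.conj_ofReal]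
    have hcx : (inner (𝕜 := ℂ) (b i) x) = c i := (b.repr_apply_apply x i).symm
    rw [hcx]
    push_cast
    rw [← Complex.conj_mul']
    ring
  simp only [hterm]
  rw [← Complex.ofReal_sum, Complex.ofReal_re]

/-- The complex Hessian of a `C²` function at an interior point is Hermitian. -/
lemma cHess_herm {n : ℕ} {Ω : Set (Fin n → ℂ)} (hΩ : IsOpen Ω)
    (φ : (Fin n → ℂ) → ℝ) (hφ : ContDiffOn ℝ 2 φ Ω) (z : Fin n → ℂ) (hz : z ∈ Ω) :
    (cHess φ z).IsHermitian := by
  have hct : ContDiffAt ℝ 2 φ z := hφ.contDiffAt (hΩ.mem_nhds hz)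
  have hsymm' : IsSymmSndFDerivAt ℝ φ z := hct.isSymmSndFDerivAt (by simp [minSmoothness_of_isRCLikeNormedField])
  have hsymm : ∀ v w : Fin n → ℂ,
      iteratedFDeriv ℝ 2 φ z ![v, w] = iteratedFDeriv ℝ 2 φ z ![w, v] := by
    intro v w
    rw [iteratedFDeriv_two_apply, iteratedFDeriv_two_apply]
    simpa using hsymm' v w
  rw [Matrix.IsHermitian]
  ext j k
  simp only [cHess, Matrix.conjTranspose_apply, Matrix.of_apply]
  rw [hsymm (Pi.single k 1 : Fin n → ℂ) (Pi.single j 1 : Fin n → ℂ),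
    hsymm (Complex.I • (Pi.single k 1 : Fin n → ℂ)) (Complex.I • (Pi.single j 1 : Fin n → ℂ)),
    hsymm (Pi.single k 1 : Fin n → ℂ) (Complex.I • (Pi.single j 1 : Fin n → ℂ)),
    hsymm (Complex.I • (Pi.single k 1 : Fin n → ℂ)) (Pi.single j 1 : Fin n → ℂ)]
  push_cast
  rw [show (star : ℂ → ℂ) = (starRingEnd ℂ) from rfl]
  simp only [Complex.ext_iff, Complex.conj_re, Complex.conj_im, Complex.mul_re, Complex.mul_im,
    Complex.add_re, Complex.add_im, Complex.sub_re, Complex.sub_im, Complex.I_re, Complex.I_im,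
    Complex.ofReal_re, Complex.ofReal_im, Complex.div_re, Complex.div_im, Complex.one_re,
    Complex.one_im, Complex.re_ofNat, Complex.im_ofNat]
  constructor <;> ring

end Aux

/-- For a C² function `φ` on an open `Ω ⊆ ℂⁿ` and a point `z ∈ Ω`, the
sum of the `q` smallest eigenvalues of the complex Hessian `H(z)` is nonnegative iff
for every complex `q`-dimensional (affine) subspace through `z` — encoded by an
orthonormal basis `e₁,…,e_q` of its direction — the Laplacian of `φ` restricted to it,
which up to a positive constant equals `∑ⱼ ⟨H(z) eⱼ, eⱼ⟩`, is nonnegative at `z`. -/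
theorem stmt_11 {n q : ℕ} (hq1 : 1 ≤ q) (hqn : q ≤ n)
    {Ω : Set (Fin n → ℂ)} (hΩ : IsOpen Ω)
    (φ : (Fin n → ℂ) → ℝ) (hφ : ContDiffOn ℝ 2 φ Ω) (z : Fin n → ℂ) (hz : z ∈ Ω) :
    0 ≤ sqMin q (cHess φ z) ↔
      ∀ e : Fin q → EuclideanSpace ℂ (Fin n), Orthonormal ℂ e →
        0 ≤ ∑ j, (inner (𝕜 := ℂ) (Matrix.toEuclideanLin (cHess φ z) (e j)) (e j)).re := by
  classical
  have hM : (cHess φ z).IsHermitian := cHess_herm hΩ φ hφ z hz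
  set M := cHess φ z with hMdef
  set lam := hM.eigenvalues with hlamdef
  set b := hM.eigenvectorBasis with hbdef
  have hsetEq : {t : ℝ | ∃ hM' : M.IsHermitian, ∃ s : Finset (Fin n),
      s.card = q ∧ t = ∑ i ∈ s, hM'.eigenvalues i} =
      {t : ℝ | ∃ s : Finset (Fin n), s.card = q ∧ t = ∑ i ∈ s, lam i} := by
    ext t
    constructor
    · rintro ⟨hM', s, h1, h2⟩; exact ⟨s, h1, h2⟩
    · rintro ⟨s, h1, h2⟩; exact ⟨hM, s, h1, h2⟩
  have hfin : {t : ℝ | ∃ s : Finset (Fin n), s.card = q ∧ t = ∑ i ∈ s, lam i}.Finite :=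
    Set.Finite.subset (Set.finite_range fun s : Finset (Fin n) => ∑ i ∈ s, lam i)
      (by rintro t ⟨s, -, rfl⟩; exact ⟨s, rfl⟩)
  obtain ⟨S0, -, hS0card⟩ := Finset.exists_subset_card_eq (s := (Finset.univ : Finset (Fin n))) (n := q)
    (by simpa using hqn)
  have hne : {t : ℝ | ∃ s : Finset (Fin n), s.card = q ∧ t = ∑ i ∈ s, lam i}.Nonempty :=
    ⟨_, S0, hS0card, rfl⟩
  have hsq : sqMin q M
      = sInf {t : ℝ | ∃ s : Finset (Fin n), s.card = q ∧ t = ∑ i ∈ s, lam i} :=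
    congrArg sInf hsetEq
  constructor
  · -- from eigenvalue sums to orthonormal families (Ky Fan inequality)
    intro h0 e he
    obtain ⟨S, hScard, hSmin⟩ := exists_min_subset hqn lam
    have hSne : S.Nonempty := Finset.card_pos.1 (by omega)
    set w : Fin n → ℝ := fun i => ∑ j, ‖b.repr (e j) i‖ ^ 2 with hw
    have hw0 : ∀ i, 0 ≤ w i := fun i => Finset.sum_nonneg fun j _ => sq_nonneg _
    have hw1 : ∀ i, w i ≤ 1 := by
      intro i
      have hb1 : ‖b i‖ = 1 := b.orthonormal.1 i
      calc w i = ∑ j, ‖(inner (𝕜 := ℂ) (e j) (b i))‖ ^ 2 := by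
            refine Finset.sum_congr rfl fun j _ => ?_
            rw [b.repr_apply_apply, norm_inner_symm]
        _ ≤ ‖b i‖ ^ 2 := he.sum_inner_products_le (b i)
        _ = 1 := by rw [hb1]; norm_num
    have hwsum : ∑ i, w i = (S.card : ℝ) := by
      rw [hScard, Finset.sum_comm]
      have : ∀ j : Fin q, ∑ i, ‖b.repr (e j) i‖ ^ 2 = 1 := by
        intro j
        rw [norm_repr_sq_sum b (e j), he.1 j]
        norm_num
      rw [Finset.sum_congr rfl fun j _ => this j]
      simp
    have hkey : ∑ i ∈ S, lam i ≤ ∑ i, lam i * w i :=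
      kyfan_core lam S hSne hSmin w hw0 hw1 hwsum
    have hrepr : ∑ j, (inner (𝕜 := ℂ) (Matrix.toEuclideanLin M (e j)) (e j)).re
        = ∑ i, lam i * w i := by
      rw [Finset.sum_congr rfl fun j (_ : j ∈ Finset.univ) => inner_eig M hM (e j),
        Finset.sum_comm]
      exact Finset.sum_congr rfl fun i _ => by rw [hw, Finset.mul_sum]
    have hle : sqMin q M ≤ ∑ i ∈ S, lam i := by
      rw [hsq]
      exact csInf_le hfin.bddBelow ⟨S, hScard, rfl⟩
    rw [hrepr]
    linarith
  · -- from orthonormal families to eigenvalue sums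
    intro h
    rw [hsq]
    refine le_csInf hne ?_
    rintro t ⟨s, hcard, rfl⟩
    set σ := s.orderIsoOfFin hcard with hσ
    set e : Fin q → EuclideanSpace ℂ (Fin n) := fun j => b (σ j) with he
    have heon : Orthonormal ℂ e :=
      b.orthonormal.comp (fun j => (σ j : Fin n))
        (Subtype.coe_injective.comp σ.toEquiv.injective)
    have h1 := h e heon
    have hterm : ∀ j, (inner (𝕜 := ℂ) (Matrix.toEuclideanLin M (e j)) (e j)).re
        = lam (σ j) := by
      intro j
      have hbb : (inner (𝕜 := ℂ) (b (σ j)) (b (σ j))) = 1 := by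
        rw [inner_self_eq_norm_sq_to_K, b.orthonormal.1 (σ j)]
        norm_num
      rw [he]
      have hb' : Matrix.toEuclideanLin M (b (σ j)) = (lam (σ j) : ℂ) • b (σ j) :=
        eig_apply M hM (σ j)
      simp only [hb', inner_smul_left, Complex.conj_ofReal, hbb, mul_one,
        Complex.ofReal_re]
    rw [Finset.sum_congr rfl fun j (_ : j ∈ Finset.univ) => hterm j] at h1
    have hsum : ∑ j, lam (σ j) = ∑ i ∈ s, lam i := by
      rw [← Finset.sum_coe_sort s lam]
      exact Equiv.sum_comp σ.toEquiv fun x => lam ↑x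
    linarith
end
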